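/- arXiv:2310.11866 — 12 statements merged into one kernel-verified Lean document; each statement's English description precedes it below -/
import Mathlib

section
/- Let n ≥ 1, d ≥ 1 and v₁,…,vₙ ∈ ℝ^d with ∑_{i=1}^n vᵢ = 0. Fix 1 ≤ A ≤ n and let 𝒜 be a uniformly random subset of {1,…,n} of cardinality A. Then E_𝒜 ‖(1/A) ∑_{b∈𝒜} v_b‖² ≤ (𝟙[A < n]/A) · (1/n) ∑_{i=1}^n ‖vᵢ‖², where 𝟙[A<n] equals 1 if A < n and 0 if A = n. -/
open Finset

lemma count_subsets_aux {α : Type*} [DecidableEq α] (s t : Finset α) (hts : t ⊆ s) (A : ℕ)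
    (hA : t.card ≤ A) :
    ((Finset.powersetCard A s).filter (fun S => t ⊆ S)).card
      = (s.card - t.card).choose (A - t.card) := by
  rw [← Finset.card_sdiff_of_subset hts, ← Finset.card_powersetCard (A - t.card) (s \ t)]
  apply Finset.card_bij (fun S _ => S \ t)
  · intro a ha
    simp only [mem_filter, mem_powersetCard] at ha
    obtain ⟨⟨has, hacard⟩, hta⟩ := ha
    rw [mem_powersetCard]
    exact ⟨sdiff_subset_sdiff has (le_refl t), by rw [card_sdiff_of_subset hta, hacard]⟩
  · intro a ha b hb h
    simp only [mem_filter, mem_powersetCard] at ha hb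
    rw [← Finset.sdiff_union_of_subset ha.2, ← Finset.sdiff_union_of_subset hb.2, h]
  · intro b hb
    rw [mem_powersetCard] at hb
    refine ⟨b ∪ t, ?_, ?_⟩
    · have hdisj : Disjoint b t := Finset.disjoint_of_subset_left hb.1 (Finset.sdiff_disjoint)
      simp only [mem_filter, mem_powersetCard]
      refine ⟨⟨Finset.union_subset (hb.1.trans Finset.sdiff_subset) hts, ?_⟩, Finset.subset_union_right⟩
      rw [Finset.card_union_of_disjoint hdisj, hb.2, Nat.sub_add_cancel hA]
    · have hdisj : Disjoint b t := Finset.disjoint_of_subset_left hb.1 (Finset.sdiff_disjoint)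
      rw [Finset.union_sdiff_distrib, Finset.sdiff_self, Finset.union_empty, hdisj.sdiff_eq_left]

/-- For `v₁,…,vₙ ∈ ℝ^d` with `∑ vᵢ = 0` and `𝒜` a uniformly random
subset of `{1,…,n}` of cardinality `A` (`1 ≤ A ≤ n`),
`E ‖(1/A) ∑_{b∈𝒜} v_b‖² ≤ (𝟙[A<n]/A) · (1/n) ∑ ‖vᵢ‖²`. -/
theorem stmt_0 (n d A : ℕ) (hn : 1 ≤ n) (hd : 1 ≤ d) (hA1 : 1 ≤ A) (hAn : A ≤ n)
    (v : Fin n → EuclideanSpace ℝ (Fin d))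
    (hsum : ∑ i, v i = 0) :
    (∑ S ∈ Finset.powersetCard A (Finset.univ : Finset (Fin n)),
        ‖(A : ℝ)⁻¹ • ∑ b ∈ S, v b‖ ^ 2) /
      ((Finset.powersetCard A (Finset.univ : Finset (Fin n))).card : ℝ)
      ≤ ((if A < n then (1 : ℝ) else 0) / (A : ℝ)) * ((1 / (n : ℝ)) * ∑ i, ‖v i‖ ^ 2) := by
  rcases eq_or_lt_of_le hAn with hAeq | hAlt
  · subst hAeq
    have huniv : Finset.powersetCard A (Finset.univ : Finset (Fin A)) = {Finset.univ} := by
      have := Finset.powersetCard_self (Finset.univ : Finset (Fin A))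
      simpa using this
    rw [huniv]
    simp [hsum]
  · have count_subsets : ∀ (s t : Finset (Fin n)), t ⊆ s → ∀ B : ℕ, t.card ≤ B →
        ((Finset.powersetCard B s).filter (fun S => t ⊆ S)).card
          = (s.card - t.card).choose (B - t.card) :=
      fun s t hts B hB => count_subsets_aux s t hts B hB
    classical
    set P := Finset.powersetCard A (Finset.univ : Finset (Fin n)) with hP
    set T : ℝ := ∑ i, ‖v i‖ ^ 2 with hT
    set N1 : ℕ := (n - 1).choose (A - 1) with hN1
    set K : ℝ := if 2 ≤ A then (((n - 2).choose (A - 2) : ℕ) : ℝ) else 0 with hK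
    have hK0 : 0 ≤ K := by rw [hK]; split <;> positivity
    have hT0 : 0 ≤ T := Finset.sum_nonneg fun i _ => by positivity
    -- counts
    have cdiag : ∀ b : Fin n,
        ((P.filter (fun S => b ∈ S ∧ b ∈ S)).card : ℕ) = N1 := by
      intro b
      have := count_subsets Finset.univ {b} (by simp) A (by simpa using hA1)
      simpa [Finset.singleton_subset_iff, and_self, Finset.card_univ] using this
    have coff : ∀ b c : Fin n, b ≠ c →
        (((P.filter (fun S => b ∈ S ∧ c ∈ S)).card : ℝ)) = K := by
      intro b c hbc
      by_cases h2 : 2 ≤ A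
      · have hcard2 : ({b, c} : Finset (Fin n)).card = 2 := by
          rw [Finset.card_insert_of_notMem (by simpa using hbc), Finset.card_singleton]
        have := count_subsets Finset.univ {b, c} (by simp) A (by rw [hcard2]; exact h2)
        rw [hcard2, Finset.card_univ, Fintype.card_fin] at this
        rw [hK, if_pos h2, ← this]
        norm_cast
        congr 1
        apply Finset.filter_congr
        intro S _
        simp [Finset.insert_subset_iff]
      · have : P.filter (fun S => b ∈ S ∧ c ∈ S) = ∅ := by
          rw [Finset.filter_eq_empty_iff]
          rintro S hS ⟨hb, hc⟩
          rw [hP, Finset.mem_powersetCard] at hS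
          have hsub : ({b, c} : Finset (Fin n)) ⊆ S := by
            simp [Finset.insert_subset_iff, hb, hc]
          have h2le := Finset.card_le_card hsub
          rw [Finset.card_insert_of_notMem (by simpa using hbc), Finset.card_singleton] at h2le
          omega
        rw [hK, if_neg h2, this]
        simp
    -- expansion of each summand
    have expand : ∀ S : Finset (Fin n),
        ‖(∑ b ∈ S, v b)‖ ^ 2
          = ∑ b, ∑ c, (if b ∈ S ∧ c ∈ S then (inner ℝ (v b) (v c) : ℝ) else 0) := by
      intro S
      have hconv : ∀ f : Fin n → ℝ, ∑ b ∈ S, f b = ∑ b, if b ∈ S then f b else 0 := by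
        intro f; rw [Finset.sum_ite_mem, Finset.univ_inter]
      rw [← real_inner_self_eq_norm_sq, sum_inner]
      simp_rw [inner_sum]
      rw [hconv]
      refine Finset.sum_congr rfl fun b _ => ?_
      by_cases hb : b ∈ S
      · simp only [hb, if_true, true_and, hconv]
      · simp [hb]
    -- swap sums
    have swap : ∑ S ∈ P, ‖(∑ b ∈ S, v b)‖ ^ 2
        = ∑ b, ∑ c, ((P.filter (fun S => b ∈ S ∧ c ∈ S)).card : ℝ) * (inner ℝ (v b) (v c) : ℝ) := by
      rw [Finset.sum_congr rfl fun S _ => expand S, Finset.sum_comm]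
      refine Finset.sum_congr rfl fun b _ => ?_
      rw [Finset.sum_comm]
      refine Finset.sum_congr rfl fun c _ => ?_
      rw [← Finset.sum_filter, Finset.sum_const, nsmul_eq_mul]
    -- row computation
    have hrow : ∀ b : Fin n,
        ∑ c, ((P.filter (fun S => b ∈ S ∧ c ∈ S)).card : ℝ) * (inner ℝ (v b) (v c) : ℝ)
          = (N1 : ℝ) * ‖v b‖ ^ 2 - K * ‖v b‖ ^ 2 := by
      intro b
      rw [← Finset.add_sum_erase _ _ (Finset.mem_univ b)]
      have h1 : ((P.filter (fun S => b ∈ S ∧ b ∈ S)).card : ℝ) = (N1 : ℝ) := by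
        exact_mod_cast congrArg Nat.cast (cdiag b)
      have h2 : ∑ c ∈ Finset.univ.erase b,
          ((P.filter (fun S => b ∈ S ∧ c ∈ S)).card : ℝ) * (inner ℝ (v b) (v c) : ℝ)
          = K * ∑ c ∈ Finset.univ.erase b, (inner ℝ (v b) (v c) : ℝ) := by
        rw [Finset.mul_sum]
        refine Finset.sum_congr rfl fun c hc => ?_
        rw [coff b c (Ne.symm (Finset.ne_of_mem_erase hc))]
      have h3 : ∑ c ∈ Finset.univ.erase b, (inner ℝ (v b) (v c) : ℝ) = -‖v b‖ ^ 2 := by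
        rw [← inner_sum]
        have : ∑ c ∈ Finset.univ.erase b, v c = -(v b) := by
          rw [Finset.sum_erase_eq_sub (Finset.mem_univ b), hsum, zero_sub]
        rw [this, inner_neg_right, real_inner_self_eq_norm_sq]
      rw [h1, h2, h3, real_inner_self_eq_norm_sq]
      ring
    -- total
    have total : ∑ S ∈ P, ‖(∑ b ∈ S, v b)‖ ^ 2 = ((N1 : ℝ) - K) * T := by
      rw [swap, Finset.sum_congr rfl fun b _ => hrow b, hT, Finset.mul_sum]
      exact Finset.sum_congr rfl fun b _ => by ring
    -- key combinatorial identity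
    have hnat : n * (n - 1).choose (A - 1) = A * n.choose A := by
      cases n with
      | zero => omega
      | succ m =>
        cases A with
        | zero => omega
        | succ B => simpa [Nat.succ_sub_one, mul_comm] using Nat.add_one_mul_choose_eq m B
    have hkey : (n : ℝ) * (N1 : ℝ) = (A : ℝ) * ((P.card : ℕ) : ℝ) := by
      rw [hP, Finset.card_powersetCard, Finset.card_univ, Fintype.card_fin]
      exact_mod_cast hnat
    have hCpos : (0 : ℝ) < ((P.card : ℕ) : ℝ) := by
      rw [hP, Finset.card_powersetCard, Finset.card_univ, Fintype.card_fin]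
      exact_mod_cast Nat.choose_pos hAn
    have hApos : (0 : ℝ) < (A : ℝ) := by exact_mod_cast hA1
    have hnpos : (0 : ℝ) < (n : ℝ) := by exact_mod_cast hn
    -- rewrite LHS
    have lhs_eq : ∑ S ∈ P, ‖(A : ℝ)⁻¹ • ∑ b ∈ S, v b‖ ^ 2
        = (A : ℝ)⁻¹ ^ 2 * (((N1 : ℝ) - K) * T) := by
      rw [← total, Finset.mul_sum]
      refine Finset.sum_congr rfl fun S _ => ?_
      rw [norm_smul, mul_pow]
      congr 1
      rw [Real.norm_eq_abs, abs_of_nonneg (by positivity)]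
    rw [lhs_eq, if_pos hAlt]
    rw [div_le_iff₀ hCpos]
    have step1 : (A : ℝ)⁻¹ ^ 2 * (((N1 : ℝ) - K) * T) ≤ (A : ℝ)⁻¹ ^ 2 * ((N1 : ℝ) * T) := by
      apply mul_le_mul_of_nonneg_left _ (by positivity)
      nlinarith
    refine step1.trans ?_
    have : (A : ℝ)⁻¹ ^ 2 * ((N1 : ℝ) * T) = 1 / (A:ℝ) * (1 / (n:ℝ) * T) * ((P.card : ℕ) : ℝ) := by
      field_simp
      linear_combination T * hkey
    rw [this]
end

section
/- Let g ∈ ℝ^d, let B be a symmetric d×d matrix with ‖B‖ ≤ κ_H for some κ_H > 0, and let m(s) = h₀ + ⟨g,s⟩ + ½⟨s,Bs⟩. Suppose w ∈ ℝ^d satisfies ‖w − g‖ ≤ ε_g and ‖w‖ ≥ ε_{∇f}, where ε_{∇f} > ε_g > 0. Fix Δ > 0 and let s^C be a minimizer of m over the set {−αg : α ≥ 0, α‖g‖ ≤ Δ}. Then for every s_k with m(s_k) ≤ m(s^C), one has m(0) − m(s_k) ≥ ½ (ε_{∇f} − ε_g) · min{Δ, (ε_{∇f} − ε_g)/κ_H}.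 -/
open RealInnerProductSpace

set_option maxHeartbeats 1000000 in
/-- Cauchy-point decrease for the inexact trust-region model in the
large-gradient case. -/
theorem stmt_1 {d : ℕ} (g w : EuclideanSpace ℝ (Fin d))
    (B : EuclideanSpace ℝ (Fin d) →L[ℝ] EuclideanSpace ℝ (Fin d))
    (hBsym : IsSelfAdjoint B) (κH : ℝ) (hκH : 0 < κH) (hBnorm : ‖B‖ ≤ κH)
    (h₀ εg εf Δ : ℝ) (hεg : 0 < εg) (hεf : εg < εf)
    (hw : ‖w - g‖ ≤ εg) (hwlow : εf ≤ ‖w‖) (hΔ : 0 < Δ)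
    (m : EuclideanSpace ℝ (Fin d) → ℝ)
    (hm : ∀ s, m s = h₀ + ⟪g, s⟫ + (1 / 2) * ⟪s, B s⟫)
    (sC : EuclideanSpace ℝ (Fin d))
    (hsC_mem : ∃ α : ℝ, 0 ≤ α ∧ α * ‖g‖ ≤ Δ ∧ sC = -(α • g))
    (hsC_min : ∀ α : ℝ, 0 ≤ α → α * ‖g‖ ≤ Δ → m sC ≤ m (-(α • g)))
    (sk : EuclideanSpace ℝ (Fin d)) (hsk : m sk ≤ m sC) :
    m 0 - m sk ≥ (1 / 2) * (εf - εg) * min Δ ((εf - εg) / κH) := by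
  set t := εf - εg with ht
  have htpos : 0 < t := by simp [ht]; linarith
  set G := ‖g‖ with hG
  have hGt : t ≤ G := by
    have h1 : ‖w‖ - ‖g‖ ≤ ‖w - g‖ := norm_sub_norm_le w g
    simp only [ht, hG]; linarith
  have hGpos : 0 < G := lt_of_lt_of_le htpos hGt
  set c := (inner ℝ g (B g) : ℝ) with hc
  have hcle : c ≤ κH * G ^ 2 := by
    have h1 : c ≤ ‖g‖ * ‖B g‖ := real_inner_le_norm g (B g)
    have h2 : ‖B g‖ ≤ ‖B‖ * ‖g‖ := B.le_opNorm g
    nlinarith [norm_nonneg (B g), norm_nonneg g, norm_nonneg B]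
  have key : ∀ α : ℝ, m (-(α • g)) = h₀ - α * G ^ 2 + (1 / 2) * α ^ 2 * c := by
    intro α
    rw [hm]
    have hB : B (-(α • g)) = -(α • B g) := by simp [map_neg, map_smul]
    rw [hB]
    simp only [inner_neg_right, inner_neg_left, real_inner_smul_right,
      real_inner_smul_left, real_inner_self_eq_norm_sq, neg_neg]
    simp only [hG, hc]
    ring
  have hm0 : m 0 = h₀ := by
    rw [hm]; simp
  have dec : ∀ α : ℝ, 0 ≤ α → α * G ≤ Δ →
      α * G ^ 2 - (1 / 2) * α ^ 2 * c ≤ m 0 - m sk := by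
    intro α hα hαΔ
    have h := hsC_min α hα hαΔ
    rw [key] at h
    rw [hm0]
    linarith
  clear_value t G c
  have hminΔ : min Δ (t / κH) ≤ Δ := min_le_left _ _
  have hminκ : min Δ (t / κH) ≤ t / κH := min_le_right _ _
  by_cases hcpos : c ≤ 0
  · have h := dec (Δ / G) (by positivity) (by field_simp; exact le_rfl)
    have e1 : Δ / G * G ^ 2 = Δ * G := by field_simp
    rw [e1] at h
    have h2 : (1 / 2) * (Δ / G) ^ 2 * c ≤ 0 := by
      have : 0 ≤ (1 / 2) * (Δ / G) ^ 2 := by positivity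
      nlinarith
    nlinarith
  · push_neg at hcpos
    by_cases hcase : G ^ 3 ≤ Δ * c
    · have hα : (0:ℝ) ≤ G ^ 2 / c := by positivity
      have hαΔ : G ^ 2 / c * G ≤ Δ := by
        rw [div_mul_eq_mul_div, div_le_iff₀ hcpos]
        nlinarith
      have h := dec (G ^ 2 / c) hα hαΔ
      have e1 : G ^ 2 / c * G ^ 2 - (1 / 2) * (G ^ 2 / c) ^ 2 * c
          = (1 / 2) * G ^ 4 / c := by field_simp; ring
      rw [e1] at h
      have h2 : (1 / 2) * G ^ 2 / κH ≤ (1 / 2) * G ^ 4 / c := by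
        rw [div_le_div_iff₀ hκH hcpos]
        nlinarith
      have h3 : (1 / 2) * t * (t / κH) ≤ (1 / 2) * G ^ 2 / κH := by
        rw [show (1 / 2) * t * (t / κH) = ((1 / 2) * (t * t)) / κH by ring]
        gcongr
        nlinarith
      have h4 : (1 / 2) * t * min Δ (t / κH) ≤ (1 / 2) * t * (t / κH) :=
        mul_le_mul_of_nonneg_left hminκ (by positivity)
      linarith
    · push_neg at hcase
      have h := dec (Δ / G) (by positivity) (by field_simp; exact le_rfl)
      have e1 : Δ / G * G ^ 2 - (1 / 2) * (Δ / G) ^ 2 * c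
          = Δ * G - (1 / 2) * Δ ^ 2 * c / G ^ 2 := by field_simp
      rw [e1] at h
      have h2 : (1 / 2) * Δ ^ 2 * c / G ^ 2 ≤ (1 / 2) * Δ * G := by
        rw [div_le_iff₀ (by positivity : (0:ℝ) < G ^ 2)]
        nlinarith
      have h4 : (1 / 2) * t * min Δ (t / κH) ≤ (1 / 2) * t * Δ :=
        mul_le_mul_of_nonneg_left hminΔ (by positivity)
      have h5 : (1 / 2) * t * Δ ≤ (1 / 2) * Δ * G := by nlinarith
      linarith
end

section
/- Let H and B be symmetric d×d matrices with ‖H − B‖ ≤ v₀·ε_B, where v₀ ∈ (0,1] and ε_H > ε_B > 0, and suppose λ_min(H) ≤ −ε_H. Let g ∈ ℝ^d, Δ > 0, and let m(s) = h₀ + ⟨g,s⟩ + ½⟨s,Bs⟩. If s ∈ ℝ^d satisfies ⟨g,s⟩ ≤ 0, ⟨s, H s⟩ ≤ v₀·λ_min(H)·Δ², and ‖s‖ = Δ, then m(0) − m(s) ≥ ½ v₀ (ε_H − ε_B) Δ². -/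
/-! Along `s` the curvature of `H` is at most `v₀ λ_min(H) Δ² ≤ -v₀ ε_H Δ²`, and replacing `H` by `B`
changes `⟪s, · s⟫` by at most `‖H - B‖ Δ² ≤ v₀ ε_B Δ²`; the linear term only helps since `⟪g, s⟫ ≤ 0`. -/

open RealInnerProductSpace

noncomputable def lambdaMin {d : ℕ}
    (H : EuclideanSpace ℝ (Fin d) →L[ℝ] EuclideanSpace ℝ (Fin d)) : ℝ :=
  sInf ((fun s => ⟪s, H s⟫) '' {s : EuclideanSpace ℝ (Fin d) | ‖s‖ = 1})

section QuadraticForm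

variable {E : Type*} [NormedAddCommGroup E] [InnerProductSpace ℝ E]

lemma real_inner_self_apply_le_opNorm_mul_sq (A : E →L[ℝ] E) (x : E) :
    ⟪x, A x⟫ ≤ ‖A‖ * ‖x‖ ^ 2 :=
  calc ⟪x, A x⟫ ≤ ‖x‖ * ‖A x‖ := real_inner_le_norm _ _
    _ ≤ ‖x‖ * (‖A‖ * ‖x‖) := by gcongr; exact A.le_opNorm x
    _ = ‖A‖ * ‖x‖ ^ 2 := by ring

lemma real_inner_self_apply_le_add_opNorm_sub_mul_sq (H B : E →L[ℝ] E) (x : E) :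
    ⟪x, B x⟫ ≤ ⟪x, H x⟫ + ‖H - B‖ * ‖x‖ ^ 2 := by
  have h := real_inner_self_apply_le_opNorm_mul_sq (B - H) x
  rw [norm_sub_rev, sub_apply, inner_sub_right] at h
  linarith

lemma quadraticModel_sub_eq {m : E → ℝ} {h₀ : ℝ} {g : E} {B : E →L[ℝ] E}
    (hm : ∀ u, m u = h₀ + ⟪g, u⟫ + (1 / 2) * ⟪u, B u⟫) (s : E) :
    m 0 - m s = -⟪g, s⟫ - (1 / 2) * ⟪s, B s⟫ := by
  simp only [hm, inner_zero_right, map_zero]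
  ring

end QuadraticForm

theorem stmt_2_general {d : ℕ}
    (H B : EuclideanSpace ℝ (Fin d) →L[ℝ] EuclideanSpace ℝ (Fin d))
    (v₀ εB εH : ℝ) (hv₀ : 0 < v₀)
    (hHB : ‖H - B‖ ≤ v₀ * εB) (hlam : lambdaMin H ≤ -εH)
    (g : EuclideanSpace ℝ (Fin d)) (Δ h₀ : ℝ)
    (m : EuclideanSpace ℝ (Fin d) → ℝ)
    (hm : ∀ u, m u = h₀ + ⟪g, u⟫ + (1 / 2) * ⟪u, B u⟫)
    (s : EuclideanSpace ℝ (Fin d))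
    (hgs : ⟪g, s⟫ ≤ 0) (hcurv : ⟪s, H s⟫ ≤ v₀ * lambdaMin H * Δ ^ 2)
    (hnorm : ‖s‖ = Δ) :
    m 0 - m s ≥ (1 / 2) * v₀ * (εH - εB) * Δ ^ 2 := by
  have hHs : ⟪s, H s⟫ ≤ -(v₀ * εH * Δ ^ 2) := by
    have : v₀ * lambdaMin H * Δ ^ 2 ≤ v₀ * (-εH) * Δ ^ 2 := by gcongr
    linarith
  have hBs : ⟪s, B s⟫ ≤ -(v₀ * (εH - εB) * Δ ^ 2) := by
    have hpert := real_inner_self_apply_le_add_opNorm_sub_mul_sq H B s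
    have : ‖H - B‖ * ‖s‖ ^ 2 ≤ v₀ * εB * Δ ^ 2 := by rw [hnorm]; gcongr
    linarith
  rw [quadraticModel_sub_eq hm]
  linarith

/-- model decrease along a sufficient negative-curvature direction. -/
theorem stmt_2 {d : ℕ}
    (H B : EuclideanSpace ℝ (Fin d) →L[ℝ] EuclideanSpace ℝ (Fin d))
    (hHsym : IsSelfAdjoint H) (hBsym : IsSelfAdjoint B)
    (v₀ εB εH : ℝ) (hv₀ : 0 < v₀) (hv₀' : v₀ ≤ 1) (hεB : 0 < εB) (hεH : εB < εH)
    (hHB : ‖H - B‖ ≤ v₀ * εB) (hlam : lambdaMin H ≤ -εH)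
    (g : EuclideanSpace ℝ (Fin d)) (Δ h₀ : ℝ) (hΔ : 0 < Δ)
    (m : EuclideanSpace ℝ (Fin d) → ℝ)
    (hm : ∀ u, m u = h₀ + ⟪g, u⟫ + (1 / 2) * ⟪u, B u⟫)
    (s : EuclideanSpace ℝ (Fin d))
    (hgs : ⟪g, s⟫ ≤ 0) (hcurv : ⟪s, H s⟫ ≤ v₀ * lambdaMin H * Δ ^ 2)
    (hnorm : ‖s‖ = Δ) :
    m 0 - m s ≥ (1 / 2) * v₀ * (εH - εB) * Δ ^ 2 :=
  stmt_2_general H B v₀ εB εH hv₀ hHB hlam g Δ h₀ m hm s hgs hcurv hnorm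
end

section
/- Let f, h : ℝ^d → ℝ be twice continuously differentiable, and suppose the Hessian of f is L_H-Lipschitz: ‖∇²f(u) − ∇²f(v)‖ ≤ L_H‖u − v‖ for all u, v. Fix x, s ∈ ℝ^d. Let g ∈ ℝ^d with ‖∇f(x) − g‖ ≤ ε_g and let B be a symmetric d×d matrix with ‖∇²f(x) − B‖ ≤ ε_B. Suppose moreover that ‖∇h(x) − ∇f(x)‖ ≤ ε₁ and that ‖∇²h(y) − ∇²f(y)‖ ≤ ε₂ for every y on the segment [x, x+s]. Then, with m(s) = h(x) + ⟨g,s⟩ + ½⟨s,Bs⟩, one has m(0) − m(s) − (h(x) − h(x+s)) ≤ 2(ε₁ + ε_g)‖s‖ + (3/2)(ε₂ + L_H‖s‖ + ε_B)‖s‖². If in addition ∇h(x) = g, the first term may be dropped: m(0) − m(s) − (h(x) − h(x+s)) ≤ (3/2)(ε₂ + L_H‖s‖ + ε_B)‖s‖². -/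
open RealInnerProductSpace

theorem key {d : ℕ} (h : EuclideanSpace ℝ (Fin d) → ℝ)
    (hh : ContDiff ℝ 2 h)
    (x s : EuclideanSpace ℝ (Fin d))
    (B : EuclideanSpace ℝ (Fin d) →L[ℝ] EuclideanSpace ℝ (Fin d))
    (C : ℝ) (hC : 0 ≤ C)
    (hb : ∀ t ∈ Set.Icc (0:ℝ) 1,
      ‖fderiv ℝ (gradient h) (x + t • s) - B‖ * ‖s‖ ^ 2 ≤ C) :
    |h (x + s) - h x - ⟪gradient h x, s⟫ - (1/2) * ⟪B s, s⟫| ≤ C := by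
  have hdh : Differentiable ℝ h := hh.differentiable (by norm_num)
  have hgd : Differentiable ℝ (gradient h) := by
    have h1 : ContDiff ℝ 1 (fderiv ℝ h) := hh.fderiv_right (by norm_num)
    have := ((InnerProductSpace.toDual ℝ (EuclideanSpace ℝ (Fin d))).symm.toContinuousLinearEquiv.differentiable).comp
      (h1.differentiable one_ne_zero)
    exact this
  set y : ℝ → EuclideanSpace ℝ (Fin d) := fun t => x + t • s with hy_def
  have hy : ∀ t, HasDerivAt y s t := by
    intro t
    have := ((hasDerivAt_id t).smul_const s).const_add x
    simpa [hy_def] using this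
  -- φ and its derivative
  have hφ : ∀ t, HasDerivAt (fun t => h (y t)) ⟪gradient h (y t), s⟫ t := by
    intro t
    have := ((hdh (y t)).hasGradientAt.hasFDerivAt).comp_hasDerivAt t (hy t)
    exact this.congr_deriv (by simp [InnerProductSpace.toDual_apply_apply])
  -- p and its derivative
  have hp : ∀ t, HasDerivAt (fun t => ⟪gradient h (y t), s⟫)
      ⟪(fderiv ℝ (gradient h) (y t)) s, s⟫ t := by
    intro t
    have hG : HasDerivAt (fun t => gradient h (y t)) ((fderiv ℝ (gradient h) (y t)) s) t :=
      (hgd (y t)).hasFDerivAt.comp_hasDerivAt t (hy t)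
    have := hG.inner ℝ (hasDerivAt_const t s)
    simpa using this
  set A : ℝ → ℝ := fun t => ⟪gradient h (y t), s⟫ - ⟪gradient h (y 0), s⟫ - t * ⟪B s, s⟫
    with hA_def
  have hA : ∀ t, HasDerivAt A (⟪((fderiv ℝ (gradient h) (y t)) - B) s, s⟫) t := by
    intro t
    have := ((hp t).sub_const ⟪gradient h (y 0), s⟫).sub ((hasDerivAt_id t).mul_const ⟪B s, s⟫)
    exact this.congr_deriv (by simp [inner_sub_left, ContinuousLinearMap.sub_apply])
  have hboundA : ∀ t ∈ Set.Icc (0:ℝ) 1, ‖⟪((fderiv ℝ (gradient h) (y t)) - B) s, s⟫‖ ≤ C := by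
    intro t ht
    calc ‖⟪((fderiv ℝ (gradient h) (y t)) - B) s, s⟫‖
        ≤ ‖((fderiv ℝ (gradient h) (y t)) - B) s‖ * ‖s‖ := norm_inner_le_norm _ _
      _ ≤ (‖(fderiv ℝ (gradient h) (y t)) - B‖ * ‖s‖) * ‖s‖ := by
          gcongr; exact ContinuousLinearMap.le_opNorm _ _
      _ = ‖(fderiv ℝ (gradient h) (y t)) - B‖ * ‖s‖ ^ 2 := by ring
      _ ≤ C := hb t ht
  have hAbound : ∀ t ∈ Set.Icc (0:ℝ) 1, ‖A t‖ ≤ C := by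
    intro t ht
    have hA0 : A 0 = 0 := by simp [hA_def]
    have := (convex_Icc (0:ℝ) 1).norm_image_sub_le_of_norm_hasDerivWithin_le
      (f := A) (f' := fun t => ⟪((fderiv ℝ (gradient h) (y t)) - B) s, s⟫)
      (fun u _ => (hA u).hasDerivWithinAt) hboundA (Set.left_mem_Icc.2 zero_le_one) ht
    rw [hA0, sub_zero, sub_zero] at this
    calc ‖A t‖ ≤ C * ‖t‖ := this
      _ ≤ C * 1 := by
          have := ht.1; have := ht.2
          gcongr
          rw [Real.norm_eq_abs, abs_of_nonneg ht.1]; exact ht.2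
      _ = C := mul_one C
  set r : ℝ → ℝ := fun t => h (y t) - h (y 0) - t * ⟪gradient h (y 0), s⟫
      - t ^ 2 / 2 * ⟪B s, s⟫ with hr_def
  have hr : ∀ t, HasDerivAt r (A t) t := by
    intro t
    have h2 : HasDerivAt (fun t : ℝ => t ^ 2 / 2 * ⟪B s, s⟫) (t * ⟪B s, s⟫) t := by
      have := (((hasDerivAt_id t).pow 2).div_const 2).mul_const ⟪B s, s⟫
      exact this.congr_deriv (by norm_num [id] <;> ring)
    have := ((((hφ t).sub_const (h (y 0))).sub
      ((hasDerivAt_id t).mul_const ⟪gradient h (y 0), s⟫)).sub h2)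
    exact this.congr_deriv (by simp [hA_def])
  have hfinal := (convex_Icc (0:ℝ) 1).norm_image_sub_le_of_norm_hasDerivWithin_le
    (f := r) (f' := A) (fun u _ => (hr u).hasDerivWithinAt) hAbound
    (Set.left_mem_Icc.2 zero_le_one) (Set.right_mem_Icc.2 zero_le_one)
  have hr0 : r 0 = 0 := by simp [hr_def]
  have hr1 : r 1 = h (x + s) - h x - ⟪gradient h x, s⟫ - (1/2) * ⟪B s, s⟫ := by
    simp only [hr_def, hy_def, one_smul, zero_smul, add_zero, one_pow, one_mul]
  rw [hr0, sub_zero, hr1] at hfinal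
  have h10 : ‖(1:ℝ) - 0‖ = 1 := by norm_num
  rw [h10, mul_one, Real.norm_eq_abs] at hfinal
  exact hfinal

/-- bound on the gap between the model decrease and the decrease of the
inexact function `h`, for the trust-region quadratic model. The Hessian of `f` at `y`
is formalized as `fderiv ℝ (gradient f) y`. -/
theorem stmt_3 {d : ℕ} (f h : EuclideanSpace ℝ (Fin d) → ℝ)
    (hf : ContDiff ℝ 2 f) (hh : ContDiff ℝ 2 h)
    (LH : ℝ)
    (hLip : ∀ u v, ‖fderiv ℝ (gradient f) u - fderiv ℝ (gradient f) v‖ ≤ LH * ‖u - v‖)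
    (x s : EuclideanSpace ℝ (Fin d))
    (g : EuclideanSpace ℝ (Fin d)) (εg εB ε₁ ε₂ : ℝ)
    (hg : ‖gradient f x - g‖ ≤ εg)
    (B : EuclideanSpace ℝ (Fin d) →L[ℝ] EuclideanSpace ℝ (Fin d))
    (hBsym : IsSelfAdjoint B) (hB : ‖fderiv ℝ (gradient f) x - B‖ ≤ εB)
    (h1 : ‖gradient h x - gradient f x‖ ≤ ε₁)
    (h2 : ∀ y ∈ segment ℝ x (x + s),
      ‖fderiv ℝ (gradient h) y - fderiv ℝ (gradient f) y‖ ≤ ε₂)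
    (m : EuclideanSpace ℝ (Fin d) → ℝ)
    (hm : ∀ u, m u = h x + ⟪g, u⟫ + (1 / 2) * ⟪u, B u⟫) :
    m 0 - m s - (h x - h (x + s)) ≤
        2 * (ε₁ + εg) * ‖s‖ + (3 / 2) * (ε₂ + LH * ‖s‖ + εB) * ‖s‖ ^ 2
      ∧ (gradient h x = g →
          m 0 - m s - (h x - h (x + s)) ≤ (3 / 2) * (ε₂ + LH * ‖s‖ + εB) * ‖s‖ ^ 2) := by
  by_cases hs0 : s = 0
  · subst hs0
    constructor
    · simp [hm]
    · intro _; simp [hm]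
  · have hsn : 0 < ‖s‖ := norm_pos_iff.2 hs0
    have hLHs : 0 ≤ LH * ‖s‖ := by
      have := hLip (x + s) x
      rw [add_sub_cancel_left] at this
      exact le_trans (norm_nonneg _) this
    have hLH : 0 ≤ LH := by
      by_contra hc
      push_neg at hc
      exact absurd hLHs (not_le.2 (mul_neg_of_neg_of_pos hc hsn))
    have hεg : 0 ≤ εg := le_trans (norm_nonneg _) hg
    have hεB : 0 ≤ εB := le_trans (norm_nonneg _) hB
    have hε₁ : 0 ≤ ε₁ := le_trans (norm_nonneg _) h1
    have hε₂ : 0 ≤ ε₂ := le_trans (norm_nonneg _) (h2 x (left_mem_segment ℝ x (x + s)))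
    have hCc : 0 ≤ ε₂ + LH * ‖s‖ + εB := by positivity
    set C : ℝ := (ε₂ + LH * ‖s‖ + εB) * ‖s‖ ^ 2 with hC_def
    have hCnn : 0 ≤ C := by positivity
    have hb : ∀ t ∈ Set.Icc (0:ℝ) 1,
        ‖fderiv ℝ (gradient h) (x + t • s) - B‖ * ‖s‖ ^ 2 ≤ C := by
      intro t ht
      have hmem : x + t • s ∈ segment ℝ x (x + s) := by
        rw [segment_eq_image']
        exact ⟨t, ht, by rw [add_sub_cancel_left]⟩
      have htri : ‖fderiv ℝ (gradient h) (x + t • s) - B‖ ≤ ε₂ + LH * ‖s‖ + εB := by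
        have e1 := h2 _ hmem
        have e2 : ‖fderiv ℝ (gradient f) (x + t • s) - fderiv ℝ (gradient f) x‖
            ≤ LH * ‖s‖ := by
          have := hLip (x + t • s) x
          rw [add_sub_cancel_left] at this
          refine this.trans ?_
          rw [norm_smul, Real.norm_eq_abs, abs_of_nonneg ht.1]
          have : t * ‖s‖ ≤ 1 * ‖s‖ := by gcongr; exact ht.2
          rw [one_mul] at this
          exact mul_le_mul_of_nonneg_left this hLH
        calc ‖fderiv ℝ (gradient h) (x + t • s) - B‖
            ≤ ‖fderiv ℝ (gradient h) (x + t • s) - fderiv ℝ (gradient f) (x + t • s)‖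
              + ‖fderiv ℝ (gradient f) (x + t • s) - fderiv ℝ (gradient f) x‖
              + ‖fderiv ℝ (gradient f) x - B‖ := by
              have heq : fderiv ℝ (gradient h) (x + t • s) - B =
                  (fderiv ℝ (gradient h) (x + t • s) - fderiv ℝ (gradient f) (x + t • s))
                  + (fderiv ℝ (gradient f) (x + t • s) - fderiv ℝ (gradient f) x)
                  + (fderiv ℝ (gradient f) x - B) := by abel
              rw [heq]
              exact (norm_add_le _ _).trans (add_le_add_left (norm_add_le _ _) _)
          _ ≤ ε₂ + LH * ‖s‖ + εB := by gcongr
      calc ‖fderiv ℝ (gradient h) (x + t • s) - B‖ * ‖s‖ ^ 2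
          ≤ (ε₂ + LH * ‖s‖ + εB) * ‖s‖ ^ 2 := by gcongr
        _ = C := hC_def.symm
    have hkey := key h hh x s B C hCnn hb
    have hBs : ⟪s, B s⟫ = ⟪B s, s⟫ := real_inner_comm _ _
    have hgap : m 0 - m s - (h x - h (x + s)) =
        (h (x + s) - h x - ⟪gradient h x, s⟫ - (1/2) * ⟪B s, s⟫)
          + ⟪gradient h x - g, s⟫ := by
      simp only [hm, inner_zero_right, inner_sub_left, hBs, map_zero, inner_zero_left]
      ring
    have hr1 : h (x + s) - h x - ⟪gradient h x, s⟫ - (1/2) * ⟪B s, s⟫ ≤ C :=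
      (abs_le.1 hkey).2
    have hC32 : C ≤ (3/2) * (ε₂ + LH * ‖s‖ + εB) * ‖s‖ ^ 2 := by
      rw [hC_def]; nlinarith [sq_nonneg ‖s‖]
    constructor
    · have hip : ⟪gradient h x - g, s⟫ ≤ (ε₁ + εg) * ‖s‖ := by
        calc ⟪gradient h x - g, s⟫ ≤ ‖gradient h x - g‖ * ‖s‖ := real_inner_le_norm _ _
          _ ≤ (ε₁ + εg) * ‖s‖ := by
            gcongr
            calc ‖gradient h x - g‖
                = ‖(gradient h x - gradient f x) + (gradient f x - g)‖ := by abel_nf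
              _ ≤ ‖gradient h x - gradient f x‖ + ‖gradient f x - g‖ := norm_add_le _ _
              _ ≤ ε₁ + εg := add_le_add h1 hg
      rw [hgap]
      have : (ε₁ + εg) * ‖s‖ ≤ 2 * (ε₁ + εg) * ‖s‖ := by nlinarith
      linarith
    · intro hge
      rw [hge] at hr1
      rw [hgap, hge, sub_self, inner_zero_left, add_zero]
      linarith
end

section
/- Let f, h : ℝ^d → ℝ be twice continuously differentiable with ∇²f being L_H-Lipschitz (L_H > 0). Fix x, s ∈ ℝ^d, Δ > 0, η ∈ (0,1), κ_H > 0, and positive constants ε_{∇f}, ε_g, ε_B, ε_h with ε_{∇f} > ε_g, ε_B < 1, ε_h < 1 and ε_{∇f} − ε_g < 1. Suppose: (i) ‖∇f(x)‖ ≥ ε_{∇f}; (ii) g ∈ ℝ^d satisfies ‖∇f(x) − g‖ ≤ ε_g; (iii) B is a symmetric d×d matrix with ‖B‖ ≤ κ_H and ‖∇²f(x) − B‖ ≤ ε_B; (iv) ‖∇h(x) − ∇f(x)‖ ≤ ε_g and ‖∇²h(y) − ∇²f(y)‖ ≤ ε_B for all y on the segment [x, x+s]; (v) ‖s‖ ≤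 Δ and m(s) ≤ m(s^C), where m(u) = h(x) + ⟨g,u⟩ + ½⟨u,Bu⟩ and s^C minimizes m over {−αg : α ≥ 0, α‖g‖ ≤ Δ}; (vi) ε_g ≤ (1/16)(1−η)(ε_{∇f} − ε_g) and Δ ≤ (ε_{∇f} − ε_g)·min{1/κ_H, (1−η)/48, √((1−η)/(12 L_H))}. Then h(x) − h(x+s) − 2ε_h‖s‖² ≥ η (m(0) − m(s)); in particular the modified acceptance ratio ρ̂ = (h(x) − h(x+s) − 2ε_h‖s‖²)/(m(0) − m(s)) satisfies ρ̂ ≥ η. -/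
set_option maxHeartbeats 1000000


open RealInnerProductSpace
open RealInnerProductSpace

lemma grad_fderiv {d : ℕ} (f : EuclideanSpace ℝ (Fin d) → ℝ) (y v : EuclideanSpace ℝ (Fin d)) :
    ⟪gradient f y, v⟫ = fderiv ℝ f y v := by
  simp [gradient, ← InnerProductSpace.toDual_apply_apply]

lemma grad_diff {d : ℕ} (f : EuclideanSpace ℝ (Fin d) → ℝ) (hf : ContDiff ℝ 2 f) :
    Differentiable ℝ (gradient f) := by
  have h1 : ContDiff ℝ 1 (fderiv ℝ f) := hf.fderiv_right (by norm_num)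
  exact fun y => ((InnerProductSpace.toDual ℝ _).symm.differentiable.differentiableAt).comp y
    (h1.differentiable one_ne_zero y)

lemma taylor_bound {d : ℕ} (h : EuclideanSpace ℝ (Fin d) → ℝ) (hh : ContDiff ℝ 2 h)
    (x s : EuclideanSpace ℝ (Fin d))
    (B : EuclideanSpace ℝ (Fin d) →L[ℝ] EuclideanSpace ℝ (Fin d)) (C : ℝ) (hC : 0 ≤ C)
    (hbound : ∀ y ∈ segment ℝ x (x + s), ‖fderiv ℝ (gradient h) y - B‖ ≤ C) :
    |h (x + s) - h x - ⟪gradient h x, s⟫ - (1/2) * ⟪s, B s⟫| ≤ C * ‖s‖ ^ 2 := by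
  have hgd := grad_diff h hh
  have hhd : Differentiable ℝ h := hh.differentiable (by norm_num)
  have hmem : ∀ t : ℝ, t ∈ Set.Icc (0:ℝ) 1 → x + t • s ∈ segment ℝ x (x + s) := by
    intro t ht
    rw [segment_eq_image']
    exact ⟨t, ht, by simp⟩
  -- MVT for the gradient map
  have hφ : ∀ t : ℝ, t ∈ Set.Icc (0:ℝ) 1 →
      ‖gradient h (x + t • s) - gradient h x - t • B s‖ ≤ C * (t * ‖s‖) := by
    intro t ht
    have hφd : ∀ y, HasFDerivAt (fun z => gradient h z - B z)
        (fderiv ℝ (gradient h) y - B) y :=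
      fun y => ((hgd y).hasFDerivAt).sub B.hasFDerivAt
    have key := Convex.norm_image_sub_le_of_norm_hasFDerivWithin_le
      (f := fun z => gradient h z - B z) (s := segment ℝ x (x + s))
      (fun y hy => (hφd y).hasFDerivWithinAt) (fun y hy => hbound y hy)
      (convex_segment x (x + s)) (left_mem_segment ℝ x (x + s)) (hmem t ht)
    have hnorm : ‖(x + t • s) - x‖ = t * ‖s‖ := by
      rw [add_sub_cancel_left, norm_smul, Real.norm_eq_abs, abs_of_nonneg ht.1]
    have he : (gradient h (x + t • s) - B (x + t • s)) - (gradient h x - B x)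
        = gradient h (x + t • s) - gradient h x - t • B s := by
      rw [map_add, map_smul]; abel
    rw [he, hnorm] at key
    exact key
  set ψ : ℝ → ℝ := fun t => h (x + t • s) - t * ⟪gradient h x, s⟫ - (t^2/2) * ⟪s, B s⟫ with hψ
  have hψd : ∀ t : ℝ, HasDerivAt ψ
      (⟪gradient h (x + t • s) - gradient h x - t • B s, s⟫) t := by
    intro t
    have hc : HasDerivAt (fun t : ℝ => x + t • s) s t := by
      simpa using (((hasDerivAt_id t).smul_const s).const_add x)
    have h1 : HasDerivAt (fun t : ℝ => h (x + t • s)) (⟪gradient h (x + t • s), s⟫) t := by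
      rw [grad_fderiv]
      exact (hhd (x + t • s)).hasFDerivAt.comp_hasDerivAt t hc
    have h2 : HasDerivAt (fun t : ℝ => t * ⟪gradient h x, s⟫) (⟪gradient h x, s⟫) t := by
      simpa using (hasDerivAt_id t).mul_const ⟪gradient h x, s⟫
    have h3 : HasDerivAt (fun t : ℝ => (t^2/2) * ⟪s, B s⟫) (t * ⟪s, B s⟫) t := by
      have h4 : HasDerivAt (fun t : ℝ => t^2/2) t t := by
        simpa using ((hasDerivAt_pow 2 t).div_const 2)
      simpa using h4.mul_const ⟪s, B s⟫
    have key := (h1.sub h2).sub h3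
    have heq : ⟪gradient h (x + t • s), s⟫ - ⟪gradient h x, s⟫ - t * ⟪s, B s⟫
        = ⟪gradient h (x + t • s) - gradient h x - t • B s, s⟫ := by
      rw [inner_sub_left, inner_sub_left, real_inner_smul_left, real_inner_comm s (B s)]
    exact heq ▸ key
  have hbd : ∀ t ∈ Set.Icc (0:ℝ) 1,
      ‖⟪gradient h (x + t • s) - gradient h x - t • B s, s⟫‖ ≤ C * ‖s‖ ^ 2 := by
    intro t ht
    calc ‖⟪gradient h (x + t • s) - gradient h x - t • B s, s⟫‖
        ≤ ‖gradient h (x + t • s) - gradient h x - t • B s‖ * ‖s‖ := norm_inner_le_norm _ _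
      _ ≤ (C * (t * ‖s‖)) * ‖s‖ :=
          mul_le_mul_of_nonneg_right (hφ t ht) (norm_nonneg s)
      _ = t * (C * ‖s‖ ^ 2) := by ring
      _ ≤ C * ‖s‖ ^ 2 := mul_le_of_le_one_left (by positivity) ht.2
  have key := (convex_Icc (0:ℝ) 1).norm_image_sub_le_of_norm_hasDerivWithin_le
    (f := ψ) (f' := fun t => ⟪gradient h (x + t • s) - gradient h x - t • B s, s⟫)
    (fun t ht => (hψd t).hasDerivWithinAt) hbd
    (Set.mem_Icc.2 ⟨le_rfl, zero_le_one⟩) (Set.mem_Icc.2 ⟨zero_le_one, le_rfl⟩)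
  have harg : h (x + s) - h x - ⟪gradient h x, s⟫ - (1/2) * ⟪s, B s⟫ = ψ 1 - ψ 0 := by
    simp [hψ]; ring
  rw [harg, ← Real.norm_eq_abs]
  simpa using key


/-- gradient-case of the minimal-radius lemma for the stochastic
trust-region method: below the stated radius threshold the iteration is successful,
i.e. the modified acceptance ratio satisfies `ρ̂ ≥ η`.  The Hessian of `f` at `y` is
formalized as `fderiv ℝ (gradient f) y`. -/
theorem stmt_4 {d : ℕ} (f h : EuclideanSpace ℝ (Fin d) → ℝ)
    (hf : ContDiff ℝ 2 f) (hh : ContDiff ℝ 2 h)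
    (LH : ℝ) (hLH : 0 < LH)
    (hLip : ∀ u v, ‖fderiv ℝ (gradient f) u - fderiv ℝ (gradient f) v‖ ≤ LH * ‖u - v‖)
    (x s : EuclideanSpace ℝ (Fin d))
    (Δ η κH εf εg εB εh : ℝ)
    (hΔ : 0 < Δ) (hη0 : 0 < η) (hη1 : η < 1) (hκH : 0 < κH)
    (hεf : 0 < εf) (hεg : 0 < εg) (hεB : 0 < εB) (hεh : 0 < εh)
    (hfg : εg < εf) (hεB1 : εB < 1) (hεh1 : εh < 1) (hfg1 : εf - εg < 1)
    -- (i) large true gradient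
    (hgradlow : εf ≤ ‖gradient f x‖)
    -- (ii) inexact gradient
    (g : EuclideanSpace ℝ (Fin d)) (hg : ‖gradient f x - g‖ ≤ εg)
    -- (iii) inexact Hessian
    (B : EuclideanSpace ℝ (Fin d) →L[ℝ] EuclideanSpace ℝ (Fin d))
    (hBsym : IsSelfAdjoint B) (hBnorm : ‖B‖ ≤ κH)
    (hB : ‖fderiv ℝ (gradient f) x - B‖ ≤ εB)
    -- (iv) inexact function h: gradient and Hessian error bounds
    (hh1 : ‖gradient h x - gradient f x‖ ≤ εg)
    (hh2 : ∀ y ∈ segment ℝ x (x + s),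
      ‖fderiv ℝ (gradient h) y - fderiv ℝ (gradient f) y‖ ≤ εB)
    -- (v) step inside the trust region, at least as good as the Cauchy point
    (hs : ‖s‖ ≤ Δ)
    (m : EuclideanSpace ℝ (Fin d) → ℝ)
    (hm : ∀ u, m u = h x + ⟪g, u⟫ + (1 / 2) * ⟪u, B u⟫)
    (sC : EuclideanSpace ℝ (Fin d))
    (hsC_mem : ∃ α : ℝ, 0 ≤ α ∧ α * ‖g‖ ≤ Δ ∧ sC = -(α • g))
    (hsC_min : ∀ α : ℝ, 0 ≤ α → α * ‖g‖ ≤ Δ → m sC ≤ m (-(α • g)))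
    (hsk : m s ≤ m sC)
    -- (vi) smallness conditions
    (hεg_small : εg ≤ (1 / 16) * (1 - η) * (εf - εg))
    (hΔ_small : Δ ≤ (εf - εg) *
      min (1 / κH) (min ((1 - η) / 48) (Real.sqrt ((1 - η) / (12 * LH))))) :
    η * (m 0 - m s) ≤ h x - h (x + s) - 2 * εh * ‖s‖ ^ 2
      ∧ (h x - h (x + s) - 2 * εh * ‖s‖ ^ 2) / (m 0 - m s) ≥ η := by
  set D := εf - εg with hD
  have hDpos : 0 < D := by simp [hD]; linarith
  -- consequences of hΔ_small
  have hη' : 0 < 1 - η := by linarith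
  have hΔκ : Δ * κH ≤ D := by
    have h1 : Δ ≤ D * (1 / κH) :=
      le_trans hΔ_small (mul_le_mul_of_nonneg_left (min_le_left _ _) hDpos.le)
    rw [mul_one_div, le_div_iff₀ hκH] at h1
    exact h1
  have hΔ1 : Δ ≤ D * ((1 - η) / 48) :=
    le_trans hΔ_small (mul_le_mul_of_nonneg_left
      (le_trans (min_le_right _ _) (min_le_left _ _)) hDpos.le)
  have hLHΔ : LH * Δ ^ 2 ≤ D * (1 - η) / 12 := by
    have h1 : Δ ≤ D * Real.sqrt ((1 - η) / (12 * LH)) :=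
      le_trans hΔ_small (mul_le_mul_of_nonneg_left
        (le_trans (min_le_right _ _) (min_le_right _ _)) hDpos.le)
    have hr : 0 ≤ (1 - η) / (12 * LH) := by positivity
    have h2 : Δ ^ 2 ≤ D ^ 2 * ((1 - η) / (12 * LH)) := by
      have h3 : Δ ^ 2 ≤ (D * Real.sqrt ((1 - η) / (12 * LH))) ^ 2 := by
        apply pow_le_pow_left₀ hΔ.le h1
      calc Δ ^ 2 ≤ (D * Real.sqrt ((1 - η) / (12 * LH))) ^ 2 := h3
        _ = D ^ 2 * ((1 - η) / (12 * LH)) := by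
            rw [mul_pow, Real.sq_sqrt hr]
    have hD1 : D ≤ 1 := by linarith
    have h4 : D ^ 2 * ((1 - η) / (12 * LH)) ≤ D * ((1 - η) / (12 * LH)) := by
      have hDD : D ^ 2 ≤ D := by
        calc D ^ 2 = D * D := sq D
          _ ≤ 1 * D := mul_le_mul_of_nonneg_right hD1 hDpos.le
          _ = D := one_mul D
      exact mul_le_mul_of_nonneg_right hDD (by positivity)
    have h5 : LH * Δ ^ 2 ≤ LH * (D * ((1 - η) / (12 * LH))) :=
      mul_le_mul_of_nonneg_left (le_trans h2 h4) hLH.le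
    calc LH * Δ ^ 2 ≤ LH * (D * ((1 - η) / (12 * LH))) := h5
      _ = D * (1 - η) / 12 := by field_simp
  -- ‖g‖ is large
  have hgnorm : D ≤ ‖g‖ := by
    have := norm_sub_norm_le (gradient f x) g
    simp [hD]; linarith
  have hgpos : 0 < ‖g‖ := lt_of_lt_of_le hDpos hgnorm
  -- Cauchy decrease
  have hm0 : m 0 = h x := by simp [hm]
  set α : ℝ := Δ / ‖g‖ with hα
  have hα0 : 0 ≤ α := by positivity
  have hαg : α * ‖g‖ = Δ := div_mul_cancel₀ _ (ne_of_gt hgpos)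
  have hmc : m sC ≤ m (-(α • g)) := hsC_min α hα0 hαg.le
  have hmα : m (-(α • g)) = h x - α * ‖g‖ ^ 2 + (α ^ 2 / 2) * ⟪g, B g⟫ := by
    have hB1 : B (-(α • g)) = -(α • B g) := by rw [map_neg, map_smul]
    rw [hm, hB1, inner_neg_right, inner_neg_neg, real_inner_smul_right,
      real_inner_smul_left, real_inner_smul_right, real_inner_self_eq_norm_sq]
    ring
  have hgBg : ⟪g, B g⟫ ≤ κH * ‖g‖ ^ 2 := by
    have t1 : ⟪g, B g⟫ ≤ ‖g‖ * ‖B g‖ := real_inner_le_norm g (B g)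
    have t2 : ‖B g‖ ≤ ‖B‖ * ‖g‖ := B.le_opNorm g
    have t3 : ‖B‖ * ‖g‖ ≤ κH * ‖g‖ := mul_le_mul_of_nonneg_right hBnorm (norm_nonneg g)
    have t4 : ‖g‖ * ‖B g‖ ≤ ‖g‖ * (κH * ‖g‖) :=
      mul_le_mul_of_nonneg_left (le_trans t2 t3) (norm_nonneg g)
    have t5 : ‖g‖ * (κH * ‖g‖) = κH * ‖g‖ ^ 2 := by ring
    linarith
  have hK : (1 / 2) * Δ * ‖g‖ ≤ m 0 - m s := by
    have h1 : α ^ 2 * ⟪g, B g⟫ ≤ Δ ^ 2 * κH := by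
      have h2 : α ^ 2 * ‖g‖ ^ 2 = Δ ^ 2 := by rw [← hαg]; ring
      calc α ^ 2 * ⟪g, B g⟫ ≤ α ^ 2 * (κH * ‖g‖ ^ 2) :=
            mul_le_mul_of_nonneg_left hgBg (sq_nonneg α)
        _ = Δ ^ 2 * κH := by rw [← h2]; ring
    have h3 : Δ ^ 2 * κH ≤ Δ * ‖g‖ := by
      calc Δ ^ 2 * κH = Δ * (Δ * κH) := by ring
        _ ≤ Δ * D := mul_le_mul_of_nonneg_left hΔκ hΔ.le
        _ ≤ Δ * ‖g‖ := mul_le_mul_of_nonneg_left hgnorm hΔ.le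
    have h4 : α * ‖g‖ ^ 2 = Δ * ‖g‖ := by rw [pow_two, ← mul_assoc, hαg]
    have h5 := le_trans hsk hmc
    rw [hmα] at h5
    rw [hm0]
    linarith [h1, h3, h4, h5]
  have hKD : (1 / 2) * Δ * D ≤ m 0 - m s := by
    refine le_trans ?_ hK
    have := mul_le_mul_of_nonneg_left hgnorm (by positivity : (0:ℝ) ≤ (1/2) * Δ)
    calc (1/2) * Δ * D = (1/2) * Δ * D := rfl
      _ ≤ (1/2) * Δ * ‖g‖ := by linarith
  have hKpos : 0 < m 0 - m s := lt_of_lt_of_le (by positivity) hKD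
  -- Hessian error bound on the segment
  set C : ℝ := 2 * εB + LH * Δ with hCdef
  have hC : 0 ≤ C := by positivity
  have hbound : ∀ y ∈ segment ℝ x (x + s), ‖fderiv ℝ (gradient h) y - B‖ ≤ C := by
    intro y hy
    have hyx : ‖y - x‖ ≤ Δ := by
      rw [segment_eq_image'] at hy
      obtain ⟨t, ht, rfl⟩ := hy
      have : x + t • (x + s - x) - x = t • s := by
        simp
      rw [this, norm_smul, Real.norm_eq_abs, abs_of_nonneg ht.1]
      calc t * ‖s‖ ≤ 1 * ‖s‖ := mul_le_mul_of_nonneg_right ht.2 (norm_nonneg s)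
        _ ≤ Δ := by simpa using hs
    calc ‖fderiv ℝ (gradient h) y - B‖
        ≤ ‖fderiv ℝ (gradient h) y - fderiv ℝ (gradient f) y‖
          + ‖fderiv ℝ (gradient f) y - fderiv ℝ (gradient f) x‖
          + ‖fderiv ℝ (gradient f) x - B‖ := by
          have := norm_sub_le_norm_sub_add_norm_sub (fderiv ℝ (gradient h) y)
            (fderiv ℝ (gradient f) y) B
          have h2 := norm_sub_le_norm_sub_add_norm_sub (fderiv ℝ (gradient f) y)
            (fderiv ℝ (gradient f) x) B
          linarith
      _ ≤ εB + LH * Δ + εB := by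
          have h1 := hh2 y hy
          have h2 := hLip y x
          have h3 : LH * ‖y - x‖ ≤ LH * Δ := mul_le_mul_of_nonneg_left hyx hLH.le
          linarith
      _ = C := by rw [hCdef]; ring
  have hT := taylor_bound h hh x s B C hC hbound
  obtain ⟨hTl, hTu⟩ := abs_le.1 hT
  -- inexact gradient at x for h
  have hinner : |⟪g - gradient h x, s⟫| ≤ 2 * εg * Δ := by
    have h1 : ‖g - gradient h x‖ ≤ 2 * εg := by
      have h2 := norm_sub_le_norm_sub_add_norm_sub g (gradient f x) (gradient h x)
      rw [norm_sub_rev g (gradient f x)] at h2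
      rw [norm_sub_rev (gradient f x) (gradient h x)] at h2
      linarith
    calc |⟪g - gradient h x, s⟫| ≤ ‖g - gradient h x‖ * ‖s‖ := abs_real_inner_le_norm _ _
      _ ≤ (2 * εg) * Δ := by
          apply mul_le_mul h1 hs (norm_nonneg s) (by positivity)
      _ = 2 * εg * Δ := by ring
  obtain ⟨hil, hiu⟩ := abs_le.1 hinner
  -- express m 0 - m s
  have e1 : m 0 - m s = -⟪g, s⟫ - (1 / 2) * ⟪s, B s⟫ := by
    rw [hm 0, hm s, inner_zero_right, map_zero, inner_zero_right]
    ring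
  have e2 : ⟪g - gradient h x, s⟫ = ⟪g, s⟫ - ⟪gradient h x, s⟫ := inner_sub_left _ _ _
  have hs2 : ‖s‖ ^ 2 ≤ Δ ^ 2 := pow_le_pow_left₀ (norm_nonneg s) hs 2
  -- main estimate
  have main : η * (m 0 - m s) ≤ h x - h (x + s) - 2 * εh * ‖s‖ ^ 2 := by
    have hnum : h x - h (x + s) - 2 * εh * ‖s‖ ^ 2
        ≥ (m 0 - m s) - 2 * εg * Δ - C * Δ ^ 2 - 2 * εh * Δ ^ 2 := by
      have hC2 : C * ‖s‖ ^ 2 ≤ C * Δ ^ 2 := mul_le_mul_of_nonneg_left hs2 hC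
      have hε2 : 2 * εh * ‖s‖ ^ 2 ≤ 2 * εh * Δ ^ 2 := mul_le_mul_of_nonneg_left hs2 (by positivity)
      rw [e2] at hil
      have t1 : h x - h (x + s) ≥ -⟪gradient h x, s⟫ - (1/2) * ⟪s, B s⟫ - C * ‖s‖ ^ 2 := by
        linarith only [hTu]
      have t2 : -⟪gradient h x, s⟫ - (1/2) * ⟪s, B s⟫ = (m 0 - m s) + (⟪g, s⟫ - ⟪gradient h x, s⟫) := by
        rw [e1]; ring
      have t3 : ⟪g, s⟫ - ⟪gradient h x, s⟫ ≥ -(2 * εg * Δ) := hil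
      have u1 : h x - h (x + s) ≥ (m 0 - m s) - 2 * εg * Δ - C * ‖s‖ ^ 2 := by
        rw [t2] at t1
        linarith only [t1, t3]
      linarith only [u1, hC2, hε2]
    have hbudget : (1 - η) * (m 0 - m s)
        ≥ 2 * εg * Δ + C * Δ ^ 2 + 2 * εh * Δ ^ 2 := by
      have b1 : 2 * εg * Δ ≤ (1 - η) * D * Δ / 8 := by
        calc 2 * εg * Δ = (2 * Δ) * εg := by ring
          _ ≤ (2 * Δ) * ((1 / 16) * (1 - η) * D) :=
              mul_le_mul_of_nonneg_left hεg_small (by positivity)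
          _ = (1 - η) * D * Δ / 8 := by ring
      have b2 : 2 * εB * Δ ^ 2 ≤ (1 - η) * D * Δ / 24 := by
        calc 2 * εB * Δ ^ 2 = εB * (2 * Δ ^ 2) := by ring
          _ ≤ 1 * (2 * Δ ^ 2) := mul_le_mul_of_nonneg_right hεB1.le (by positivity)
          _ = (2 * Δ) * Δ := by ring
          _ ≤ (2 * Δ) * (D * ((1 - η) / 48)) :=
              mul_le_mul_of_nonneg_left hΔ1 (by positivity)
          _ = (1 - η) * D * Δ / 24 := by ring
      have b3 : LH * Δ * Δ ^ 2 ≤ (1 - η) * D * Δ / 12 := by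
        calc LH * Δ * Δ ^ 2 = Δ * (LH * Δ ^ 2) := by ring
          _ ≤ Δ * (D * (1 - η) / 12) := mul_le_mul_of_nonneg_left hLHΔ hΔ.le
          _ = (1 - η) * D * Δ / 12 := by ring
      have b4 : 2 * εh * Δ ^ 2 ≤ (1 - η) * D * Δ / 24 := by
        calc 2 * εh * Δ ^ 2 = εh * (2 * Δ ^ 2) := by ring
          _ ≤ 1 * (2 * Δ ^ 2) := mul_le_mul_of_nonneg_right hεh1.le (by positivity)
          _ = (2 * Δ) * Δ := by ring
          _ ≤ (2 * Δ) * (D * ((1 - η) / 48)) :=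
              mul_le_mul_of_nonneg_left hΔ1 (by positivity)
          _ = (1 - η) * D * Δ / 24 := by ring
      have b5 : (1 - η) * ((1 / 2) * Δ * D) ≤ (1 - η) * (m 0 - m s) :=
        mul_le_mul_of_nonneg_left hKD hη'.le
      rw [hCdef]
      linarith [b1, b2, b3, b4, b5]
    linarith [hnum, hbudget]
  refine ⟨main, ?_⟩
  rw [ge_iff_le, le_div_iff₀ hKpos]
  linarith [main]
end

section
/- Let f, h : ℝ^d → ℝ be twice continuously differentiable with ∇²f being L_H-Lipschitz (L_H > 0). Fix x, s ∈ ℝ^d, Δ > 0, η ∈ (0,1), and positive constants ε_H, ε_B, ε_h with ε_H > ε_B and ε_h ≤ ε_B ≤ (1/20)(1−η)(ε_H − ε_B). Suppose: (i) λ_min(∇²f(x)) ≤ −ε_H; (ii) B is a symmetric d×d matrix with ‖∇²f(x) − B‖ ≤ ε_B; (iii) g = ∇h(x) and ‖∇²h(y) − ∇²f(y)‖ ≤ ε_B for all y on the segment [x, x+s]; (iv) s satisfies ⟨g,s⟩ ≤ 0, ⟨s, ∇²f(x) s⟩ ≤ λ_min(∇²f(x))·Δ², and ‖s‖ = Δ;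 (v) Δ ≤ (1−η)(ε_H − ε_B)/(6 L_H). Then, with m(u) = h(x) + ⟨g,u⟩ + ½⟨u,Bu⟩, one has h(x) − h(x+s) − 2ε_h‖s‖² ≥ η (m(0) − m(s)); in particular the modified acceptance ratio ρ̂ = (h(x) − h(x+s) − 2ε_h‖s‖²)/(m(0) − m(s)) satisfies ρ̂ ≥ η. -/
open RealInnerProductSpace

set_option maxHeartbeats 1000000 in
/-- negative-curvature case of the minimal-radius lemma for the
stochastic trust-region method: below the stated radius threshold the iteration is
successful, i.e. the modified acceptance ratio satisfies `ρ̂ ≥ η`.  The Hessian of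
`f` at `y` is formalized as `fderiv ℝ (gradient f) y`. -/
theorem stmt_5 {d : ℕ} (f h : EuclideanSpace ℝ (Fin d) → ℝ)
    (hf : ContDiff ℝ 2 f) (hh : ContDiff ℝ 2 h)
    (LH : ℝ) (hLH : 0 < LH)
    (hLip : ∀ u v, ‖fderiv ℝ (gradient f) u - fderiv ℝ (gradient f) v‖ ≤ LH * ‖u - v‖)
    (x s : EuclideanSpace ℝ (Fin d))
    (Δ η εH εB εh : ℝ)
    (hΔ : 0 < Δ) (hη0 : 0 < η) (hη1 : η < 1)
    (hεH : 0 < εH) (hεB : 0 < εB) (hεh : 0 < εh) (hHB : εB < εH)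
    (hεh_le : εh ≤ εB) (hεB_small : εB ≤ (1 / 20) * (1 - η) * (εH - εB))
    -- (i) sufficiently negative curvature of the true Hessian
    (hlam : lambdaMin (fderiv ℝ (gradient f) x) ≤ -εH)
    -- (ii) inexact Hessian
    (B : EuclideanSpace ℝ (Fin d) →L[ℝ] EuclideanSpace ℝ (Fin d))
    (hBsym : IsSelfAdjoint B) (hB : ‖fderiv ℝ (gradient f) x - B‖ ≤ εB)
    -- (iii) the model gradient is the gradient of h, Hessian error bound along the segment
    (g : EuclideanSpace ℝ (Fin d)) (hgdef : g = gradient h x)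
    (hh2 : ∀ y ∈ segment ℝ x (x + s),
      ‖fderiv ℝ (gradient h) y - fderiv ℝ (gradient f) y‖ ≤ εB)
    -- (iv) negative-curvature step
    (hgs : ⟪g, s⟫ ≤ 0)
    (hcurv : ⟪s, (fderiv ℝ (gradient f) x) s⟫ ≤ lambdaMin (fderiv ℝ (gradient f) x) * Δ ^ 2)
    (hnorm : ‖s‖ = Δ)
    -- (v) small radius
    (hΔ_small : Δ ≤ (1 - η) * (εH - εB) / (6 * LH))
    (m : EuclideanSpace ℝ (Fin d) → ℝ)
    (hm : ∀ u, m u = h x + ⟪g, u⟫ + (1 / 2) * ⟪u, B u⟫) :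
    η * (m 0 - m s) ≤ h x - h (x + s) - 2 * εh * ‖s‖ ^ 2
      ∧ (h x - h (x + s) - 2 * εh * ‖s‖ ^ 2) / (m 0 - m s) ≥ η := by

  have hx_mem : x ∈ segment ℝ x (x + s) := left_mem_segment ℝ x (x + s)
  have hxs_mem : x + s ∈ segment ℝ x (x + s) := right_mem_segment ℝ x (x + s)
  have hconv : Convex ℝ (segment ℝ x (x + s)) := convex_segment x (x + s)
  -- gradient h is differentiable everywhere
  have hgrad_diff : ∀ y, DifferentiableAt ℝ (gradient h) y := by
    intro y
    have h1 : ContDiff ℝ 1 (fderiv ℝ h) := hh.fderiv_right (by norm_num)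
    have he : gradient h
        = fun y => (InnerProductSpace.toDual ℝ (EuclideanSpace ℝ (Fin d))).symm (fderiv ℝ h y) :=
      rfl
    rw [he]
    exact (((InnerProductSpace.toDual ℝ
      (EuclideanSpace ℝ (Fin d))).symm.toContinuousLinearEquiv.differentiable.comp
      (h1.differentiable one_ne_zero))).differentiableAt
  -- points of the segment are within distance Δ of x
  have hsegnorm : ∀ y ∈ segment ℝ x (x + s), ‖y - x‖ ≤ Δ := by
    rintro y ⟨a, b, ha, hb, hab, rfl⟩
    have e : a • x + b • (x + s) - x = b • s := by
      have : a • x + b • (x + s) = x + b • s := by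
        rw [smul_add, ← add_assoc, ← add_smul, hab, one_smul]
      rw [this]; abel
    rw [e, norm_smul, Real.norm_eq_abs, abs_of_nonneg hb, hnorm]
    nlinarith
  -- Lemma A: mean value bound for the gradient of h against Hess f x
  have keyA : ∀ y ∈ segment ℝ x (x + s),
      ‖gradient h y - gradient h x - (fderiv ℝ (gradient f) x) (y - x)‖
        ≤ (εB + LH * Δ) * ‖y - x‖ := by
    intro y hy
    have mvt := hconv.norm_image_sub_le_of_norm_hasFDerivWithin_le
      (f := fun y => gradient h y - (fderiv ℝ (gradient f) x) y)
      (f' := fun y => fderiv ℝ (gradient h) y - fderiv ℝ (gradient f) x)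
      (C := εB + LH * Δ)
      (fun z _ =>
        (((hgrad_diff z).hasFDerivAt.sub
          (fderiv ℝ (gradient f) x).hasFDerivAt)).hasFDerivWithinAt)
      (fun z hz => by
        have htri := norm_sub_le_norm_sub_add_norm_sub (fderiv ℝ (gradient h) z)
          (fderiv ℝ (gradient f) z) (fderiv ℝ (gradient f) x)
        have h1 := hh2 z hz
        have h2 := hLip z x
        have h3 := hsegnorm z hz
        have h4 : LH * ‖z - x‖ ≤ LH * Δ := by nlinarith
        linarith)
      hx_mem hy
    have harr : (gradient h y - (fderiv ℝ (gradient f) x) y)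
        - (gradient h x - (fderiv ℝ (gradient f) x) x)
        = gradient h y - gradient h x - (fderiv ℝ (gradient f) x) (y - x) := by
      rw [map_sub]; abel
    rw [harr] at mvt
    exact mvt
  -- self-adjointness of B as an inner product identity
  have hBadj : ∀ u v : EuclideanSpace ℝ (Fin d), ⟪B u, v⟫ = ⟪u, B v⟫ := by
    intro u v
    conv_lhs => rw [← ContinuousLinearMap.isSelfAdjoint_iff'.mp hBsym]
    exact ContinuousLinearMap.adjoint_inner_left B v u
  -- the auxiliary function ψ and its derivative
  set w : EuclideanSpace ℝ (Fin d) → EuclideanSpace ℝ (Fin d) :=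
    fun y => gradient h y - g - B (y - x) with hw
  set ψ : EuclideanSpace ℝ (Fin d) → ℝ :=
    fun y => h y - ⟪g, y⟫ - (1 / 2) * ⟪y - x, B (y - x)⟫ with hψ
  have hψderiv : ∀ y,
      HasFDerivAt ψ ((InnerProductSpace.toDual ℝ (EuclideanSpace ℝ (Fin d))) (w y)) y := by
    intro y
    have hhy : HasFDerivAt h
        ((InnerProductSpace.toDual ℝ (EuclideanSpace ℝ (Fin d))) (gradient h y)) y := by
      have hd : DifferentiableAt ℝ h y :=
        (hh.differentiable (by norm_num)).differentiableAt
      have e : (InnerProductSpace.toDual ℝ (EuclideanSpace ℝ (Fin d))) (gradient h y)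
          = fderiv ℝ h y :=
        (InnerProductSpace.toDual ℝ (EuclideanSpace ℝ (Fin d))).apply_symm_apply _
      rw [e]; exact hd.hasFDerivAt
    have hinner : HasFDerivAt (fun y : EuclideanSpace ℝ (Fin d) => ⟪g, y⟫) (innerSL ℝ g) y :=
      (innerSL ℝ g).hasFDerivAt
    have hu : HasFDerivAt (fun y : EuclideanSpace ℝ (Fin d) => y - x)
        (ContinuousLinearMap.id ℝ (EuclideanSpace ℝ (Fin d))) y :=
      (hasFDerivAt_id y).sub_const x
    have hv : HasFDerivAt (fun y : EuclideanSpace ℝ (Fin d) => B (y - x)) B y := by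
      have hc := B.hasFDerivAt.comp y hu
      have e : (⇑B ∘ fun y : EuclideanSpace ℝ (Fin d) => y - x)
          = fun y : EuclideanSpace ℝ (Fin d) => B (y - x) := rfl
      rw [e] at hc
      simpa using hc
    have hq := (hu.inner ℝ hv)
    have hcomb := (hhy.sub hinner).sub (hq.const_mul (1 / 2 : ℝ))
    have hψ' : HasFDerivAt ψ _ y := hcomb
    refine hψ'.congr_fderiv ?_
    ext v
    simp only [hw, InnerProductSpace.toDual_apply_apply, ContinuousLinearMap.coe_sub', Pi.sub_apply,
      ContinuousLinearMap.coe_smul', Pi.smul_apply,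
      fderivInnerCLM_apply, ContinuousLinearMap.comp_apply,
      ContinuousLinearMap.prod_apply, ContinuousLinearMap.id_apply,
      innerSL_apply_apply, inner_sub_left, smul_eq_mul]
    rw [show ⟪y, B v⟫ - ⟪x, B v⟫ = ⟪y - x, B v⟫ by rw [inner_sub_left],
      ← hBadj (y - x) v, real_inner_comm v (B (y - x))]
    ring
  -- bound on the derivative of ψ along the segment
  have hψbound : ∀ y ∈ segment ℝ x (x + s),
      ‖(InnerProductSpace.toDual ℝ (EuclideanSpace ℝ (Fin d))) (w y)‖
        ≤ (2 * εB + LH * Δ) * Δ := by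
    intro y hy
    rw [LinearIsometryEquiv.norm_map]
    have hsplit : w y = (gradient h y - gradient h x - (fderiv ℝ (gradient f) x) (y - x))
        + ((fderiv ℝ (gradient f) x - B) (y - x)) := by
      rw [hw]
      simp only [ContinuousLinearMap.sub_apply]
      rw [hgdef]; abel
    rw [hsplit]
    have h1 := keyA y hy
    have h3 := hsegnorm y hy
    have hnn : (0 : ℝ) ≤ ‖y - x‖ := norm_nonneg _
    have h2 : ‖(fderiv ℝ (gradient f) x - B) (y - x)‖ ≤ εB * ‖y - x‖ := by
      calc ‖(fderiv ℝ (gradient f) x - B) (y - x)‖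
          ≤ ‖fderiv ℝ (gradient f) x - B‖ * ‖y - x‖ :=
            (fderiv ℝ (gradient f) x - B).le_opNorm _
        _ ≤ εB * ‖y - x‖ := mul_le_mul_of_nonneg_right hB hnn
    calc ‖(gradient h y - gradient h x - (fderiv ℝ (gradient f) x) (y - x))
          + (fderiv ℝ (gradient f) x - B) (y - x)‖
        ≤ ‖gradient h y - gradient h x - (fderiv ℝ (gradient f) x) (y - x)‖
          + ‖(fderiv ℝ (gradient f) x - B) (y - x)‖ := norm_add_le _ _
      _ ≤ (εB + LH * Δ) * ‖y - x‖ + εB * ‖y - x‖ := by linarith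
      _ = (2 * εB + LH * Δ) * ‖y - x‖ := by ring
      _ ≤ (2 * εB + LH * Δ) * Δ := mul_le_mul_of_nonneg_left h3 (by positivity)
  -- mean value inequality for ψ
  have hmvt := hconv.norm_image_sub_le_of_norm_hasFDerivWithin_le
    (f := ψ) (f' := fun y => (InnerProductSpace.toDual ℝ (EuclideanSpace ℝ (Fin d))) (w y))
    (C := (2 * εB + LH * Δ) * Δ)
    (fun z _ => (hψderiv z).hasFDerivWithinAt) hψbound hx_mem hxs_mem
  have e1 : (x + s) - x = s := add_sub_cancel_left x s
  rw [e1, hnorm] at hmvt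
  have eψ : ψ (x + s) - ψ x = h (x + s) - h x - ⟪g, s⟫ - (1 / 2) * ⟪s, B s⟫ := by
    rw [hψ]
    simp only [e1, sub_self]
    simp [inner_add_right]
    ring
  have htaylor : h (x + s) - h x - ⟪g, s⟫ - (1 / 2) * ⟪s, B s⟫
      ≤ (2 * εB + LH * Δ) * Δ ^ 2 := by
    have h0 := le_of_abs_le (by rwa [Real.norm_eq_abs] at hmvt)
    rw [eψ] at h0
    have e2 : (2 * εB + LH * Δ) * Δ * Δ = (2 * εB + LH * Δ) * Δ ^ 2 := by ring
    linarith [h0]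
  -- curvature bound: ⟪s, B s⟫ ≤ (-εH + εB) Δ²
  have hQ : ⟪s, B s⟫ ≤ (-εH + εB) * Δ ^ 2 := by
    have hsplit : ⟪s, B s⟫
        = ⟪s, (fderiv ℝ (gradient f) x) s⟫ - ⟪s, (fderiv ℝ (gradient f) x - B) s⟫ := by
      simp only [ContinuousLinearMap.sub_apply, inner_sub_right]
      ring
    have h1 : -(εB * Δ ^ 2) ≤ ⟪s, (fderiv ℝ (gradient f) x - B) s⟫ := by
      have hcs := abs_real_inner_le_norm s ((fderiv ℝ (gradient f) x - B) s)
      have hop := (fderiv ℝ (gradient f) x - B).le_opNorm s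
      have habs : |⟪s, (fderiv ℝ (gradient f) x - B) s⟫| ≤ εB * Δ ^ 2 := by
        calc |⟪s, (fderiv ℝ (gradient f) x - B) s⟫|
            ≤ ‖s‖ * ‖(fderiv ℝ (gradient f) x - B) s‖ := hcs
          _ ≤ εB * Δ ^ 2 := by
              rw [hnorm] at hop ⊢
              nlinarith [norm_nonneg ((fderiv ℝ (gradient f) x - B) s)]
      linarith [(abs_le.mp habs).1]
    have h2 : lambdaMin (fderiv ℝ (gradient f) x) * Δ ^ 2 ≤ -εH * Δ ^ 2 := by
      nlinarith
    rw [hsplit]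
    linarith
  -- model decrease
  have hm0 : m 0 = h x := by rw [hm]; simp
  have hms : m s = h x + ⟪g, s⟫ + (1 / 2) * ⟪s, B s⟫ := hm s
  have hD : m 0 - m s = -⟪g, s⟫ - (1 / 2) * ⟪s, B s⟫ := by rw [hm0, hms]; ring
  have hΔ2 : (0 : ℝ) < Δ ^ 2 := pow_pos hΔ 2
  have hDlb : (1 / 2) * (εH - εB) * Δ ^ 2 ≤ m 0 - m s := by
    rw [hD]; nlinarith
  have hDpos : 0 < m 0 - m s := by nlinarith
  -- radius bound
  have hLHΔ : LH * Δ ≤ (1 - η) * (εH - εB) / 6 := by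
    have h6 : (0 : ℝ) < 6 * LH := by linarith
    have := (le_div_iff₀ h6).mp hΔ_small
    nlinarith
  -- putting everything together
  have hc_le : 2 * εB + LH * Δ + 2 * εh ≤ (1 / 2) * ((1 - η) * (εH - εB)) := by
    nlinarith [hεB_small, hεh_le, hLHΔ]
  have key : (2 * εB + LH * Δ + 2 * εh) * Δ ^ 2
      ≤ ((1 / 2) * ((1 - η) * (εH - εB))) * Δ ^ 2 :=
    mul_le_mul_of_nonneg_right hc_le (le_of_lt hΔ2)
  have h1η : (0 : ℝ) ≤ 1 - η := by linarith
  have key2 : (1 - η) * ((1 / 2) * (εH - εB) * Δ ^ 2) ≤ (1 - η) * (m 0 - m s) :=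
    mul_le_mul_of_nonneg_left hDlb h1η
  have main : η * (m 0 - m s) ≤ h x - h (x + s) - 2 * εh * ‖s‖ ^ 2 := by
    rw [hnorm]
    nlinarith [htaylor, hD, key, key2]
  refine ⟨main, ?_⟩
  rw [ge_iff_le, le_div_iff₀ hDpos]
  exact main
end

section
/- Let g ∈ ℝ^d with g ≠ 0, let B be a symmetric d×d matrix with ‖B‖ > 0, let σ > 0, and let p(s) = h₀ + ⟨g,s⟩ + ½⟨s,Bs⟩ + (σ/3)‖s‖³. Set α = 2/(‖B‖ + √(‖B‖² + 4σ‖g‖)). Then p(0) − p(−α g) ≥ (‖g‖/10) · min{ ‖g‖/‖B‖, √(‖g‖/σ) }. Consequently, for any s_k with p(s_k) ≤ p(−α g) (in particular for any s_k with p(s_k) ≤ p(s^C), where s^C = −α_k g and α_k minimizes α ↦ p(−α g) over α ≥ 0), one has p(0) − p(s_k) ≥ (‖g‖/10) · min{ ‖g‖/‖B‖, √(‖g‖/σ) }. -/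
open RealInnerProductSpace

set_option maxHeartbeats 1000000 in
/-- Cauchy-point decrease for the cubic-regularized model. -/
theorem stmt_6 {d : ℕ} (g : EuclideanSpace ℝ (Fin d)) (hg : g ≠ 0)
    (B : EuclideanSpace ℝ (Fin d) →L[ℝ] EuclideanSpace ℝ (Fin d))
    (hBsym : IsSelfAdjoint B) (hBpos : 0 < ‖B‖)
    (σ h₀ : ℝ) (hσ : 0 < σ)
    (p : EuclideanSpace ℝ (Fin d) → ℝ)
    (hp : ∀ u, p u = h₀ + ⟪g, u⟫ + (1 / 2) * ⟪u, B u⟫ + (σ / 3) * ‖u‖ ^ 3)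
    (α : ℝ) (hα : α = 2 / (‖B‖ + Real.sqrt (‖B‖ ^ 2 + 4 * σ * ‖g‖))) :
    p 0 - p (-(α • g)) ≥ (‖g‖ / 10) * min (‖g‖ / ‖B‖) (Real.sqrt (‖g‖ / σ))
      ∧ ∀ sk, p sk ≤ p (-(α • g)) →
          p 0 - p sk ≥ (‖g‖ / 10) * min (‖g‖ / ‖B‖) (Real.sqrt (‖g‖ / σ)) := by
  have hG : 0 < ‖g‖ := norm_pos_iff.mpr hg
  set G := ‖g‖ with hGdef
  set b := ‖B‖ with hbdef
  set S := Real.sqrt (b ^ 2 + 4 * σ * G) with hSdef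
  have hSnn : 0 ≤ S := Real.sqrt_nonneg _
  have hS2 : S ^ 2 = b ^ 2 + 4 * σ * G := Real.sq_sqrt (by positivity)
  have hSb : b ≤ S := by nlinarith [hS2, mul_pos hσ hG]
  have hD : 0 < b + S := by linarith
  have hαpos : 0 < α := by rw [hα]; positivity
  have hα2 : α * (b + S) = 2 := by
    rw [hα]; field_simp
  have hαb : α * b ≤ 1 := by nlinarith [mul_le_mul_of_nonneg_left hSb hαpos.le]
  have key : σ * G * α ^ 2 = 1 - α * b := by nlinarith [hα2, hS2]
  -- inner product bound
  have hinner : ⟪g, B g⟫ ≤ b * G ^ 2 := by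
    calc ⟪g, B g⟫ ≤ ‖g‖ * ‖B g‖ := real_inner_le_norm _ _
      _ ≤ ‖g‖ * (‖B‖ * ‖g‖) := by
          have := B.le_opNorm g
          nlinarith [hG]
      _ = b * G ^ 2 := by rw [← hGdef, ← hbdef]; ring
  -- value of the model at the Cauchy-type point
  have hval : p 0 - p (-(α • g)) = α * G ^ 2 - (1 / 2) * α ^ 2 * ⟪g, B g⟫
      - (σ / 3) * (α * G) ^ 3 := by
    rw [hp, hp]
    simp only [inner_zero_right, map_zero, inner_zero_left, norm_zero, map_neg, map_smul,
      inner_neg_neg, inner_neg_right, inner_neg_left, real_inner_smul_left, real_inner_smul_right,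
      norm_neg, norm_smul, Real.norm_eq_abs, abs_of_pos hαpos,
      real_inner_self_eq_norm_sq]
    rw [← hGdef]; ring
  -- main decrease bound
  have hmain : p 0 - p (-(α • g)) ≥ (α / 2) * G ^ 2 := by
    rw [hval]
    have h1 : α ^ 2 * ⟪g, B g⟫ ≤ α ^ 2 * (b * G ^ 2) :=
      mul_le_mul_of_nonneg_left hinner (sq_nonneg α)
    have h2 : (σ / 3) * (α * G) ^ 3 = (α * G ^ 2 / 3) * (σ * G * α ^ 2) := by ring
    rw [h2, key]
    nlinarith [mul_nonneg (mul_nonneg hαpos.le (sq_nonneg G)) (sub_nonneg.mpr hαb), h1]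
  -- lower bound on α
  set t := Real.sqrt (σ * G) with htdef
  have htpos : 0 < t := Real.sqrt_pos.mpr (by positivity)
  have ht2 : t ^ 2 = σ * G := Real.sq_sqrt (by positivity)
  have hSle : S ≤ b + 2 * t := by
    have h : b ^ 2 + 4 * σ * G ≤ (b + 2 * t) ^ 2 := by
      nlinarith [mul_nonneg hBpos.le htpos.le]
    calc S ≤ Real.sqrt ((b + 2 * t) ^ 2) := Real.sqrt_le_sqrt h
      _ = b + 2 * t := by
          rw [Real.sqrt_sq (by positivity)]
  have hαge : 1 / (b + t) ≤ α := by
    rw [hα, div_le_div_iff₀ (by positivity) hD]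
    nlinarith
  -- bound the RHS
  have hbound : (G / 10) * min (G / b) (Real.sqrt (G / σ)) ≤ (α / 2) * G ^ 2 := by
    rcases le_total b t with hbt | htb
    · -- b ≤ t : use the sqrt branch
      have hsq : Real.sqrt (G / σ) = G / t := by
        rw [eq_div_iff htpos.ne']
        rw [htdef, ← Real.sqrt_mul (by positivity)]
        rw [show G / σ * (σ * G) = G ^ 2 by field_simp]
        exact Real.sqrt_sq hG.le
      have hmin : min (G / b) (Real.sqrt (G / σ)) ≤ G / t := by
        rw [hsq]; exact min_le_right _ _
      have hα5 : 1 / (5 * t) ≤ α := by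
        refine le_trans ?_ hαge
        apply div_le_div_of_nonneg_left (by norm_num) (by positivity)
        linarith
      have : (G / 10) * (G / t) ≤ (α / 2) * G ^ 2 := by
        have heq : (G / 10) * (G / t) = (1 / (5 * t) / 2) * G ^ 2 := by
          field_simp [htpos.ne']; ring
        rw [heq]
        exact mul_le_mul_of_nonneg_right (by linarith) (sq_nonneg G)
      calc (G / 10) * min (G / b) (Real.sqrt (G / σ)) ≤ (G / 10) * (G / t) := by
            apply mul_le_mul_of_nonneg_left hmin (by positivity)
        _ ≤ (α / 2) * G ^ 2 := this
    · -- t ≤ b : use G/b branch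
      have hmin : min (G / b) (Real.sqrt (G / σ)) ≤ G / b := min_le_left _ _
      have hα5 : 1 / (5 * b) ≤ α := by
        refine le_trans ?_ hαge
        apply div_le_div_of_nonneg_left (by norm_num) (by positivity)
        linarith
      have : (G / 10) * (G / b) ≤ (α / 2) * G ^ 2 := by
        have heq : (G / 10) * (G / b) = (1 / (5 * b) / 2) * G ^ 2 := by
          field_simp [hBpos.ne']; ring
        rw [heq]
        exact mul_le_mul_of_nonneg_right (by linarith) (sq_nonneg G)
      calc (G / 10) * min (G / b) (Real.sqrt (G / σ)) ≤ (G / 10) * (G / b) := by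
            apply mul_le_mul_of_nonneg_left hmin (by positivity)
        _ ≤ (α / 2) * G ^ 2 := this
  have hfirst : p 0 - p (-(α • g)) ≥ (G / 10) * min (G / b) (Real.sqrt (G / σ)) :=
    le_trans hbound hmain
  exact ⟨hfirst, fun sk hsk => le_trans hbound (by linarith [hmain])⟩
end

section
/- Let g ∈ ℝ^d, let B be a symmetric d×d matrix, and let σ > 0. If s ∈ ℝ^d satisfies the first-order condition ⟨g,s⟩ + ⟨s,Bs⟩ + σ‖s‖³ = 0, then ‖s‖ ≤ (11/4) · max{ ‖B‖/σ, √(‖g‖/σ) }. -/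
/-!
Bounding both inner products by Cauchy–Schwarz and the operator norm turns the first-order
condition into the scalar inequality `σ t³ ≤ ‖g‖ t + ‖B‖ t²` for `t = ‖s‖`. With
`M = max (‖B‖ / σ) √(‖g‖ / σ)` this gives `t² ≤ M² + M t`, whose positive root is below `2 M`.
-/

open RealInnerProductSpace

lemma le_two_mul_of_sq_le_sq_add_mul {t M : ℝ} (hM : 0 ≤ M) (h : t ^ 2 ≤ M ^ 2 + M * t) :
    t ≤ 2 * M := by
  by_contra! hlt
  nlinarith [mul_le_mul_of_nonneg_left hlt.le hM]

lemma le_two_mul_max_of_mul_pow_three_le {σ a b t : ℝ} (hσ : 0 < σ) (ht : 0 ≤ t)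
    (h : σ * t ^ 3 ≤ a * t + b * t ^ 2) :
    t ≤ 2 * max (b / σ) (√(a / σ)) := by
  set M := max (b / σ) (√(a / σ))
  have hM : 0 ≤ M := (Real.sqrt_nonneg _).trans (le_max_right _ _)
  rcases ht.eq_or_lt with rfl | htpos
  · positivity
  have hb : b ≤ σ * M := (div_le_iff₀' hσ).1 (le_max_left _ _)
  have ha : a ≤ σ * M ^ 2 := by
    rw [← div_le_iff₀' hσ, ← Real.sqrt_le_left hM]
    exact le_max_right _ _
  apply le_two_mul_of_sq_le_sq_add_mul hM
  have : σ * t * t ^ 2 ≤ σ * t * (M ^ 2 + M * t) := by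
    nlinarith [mul_le_mul_of_nonneg_right ha ht, mul_le_mul_of_nonneg_right hb (sq_nonneg t)]
  exact le_of_mul_le_mul_left this (mul_pos hσ htpos)

lemma mul_norm_pow_three_le_of_inner_add_inner_add_eq_zero {E : Type*}
    [NormedAddCommGroup E] [InnerProductSpace ℝ E] {g s : E} {B : E →L[ℝ] E} {σ : ℝ}
    (h : ⟪g, s⟫ + ⟪s, B s⟫ + σ * ‖s‖ ^ 3 = 0) :
    σ * ‖s‖ ^ 3 ≤ ‖g‖ * ‖s‖ + ‖B‖ * ‖s‖ ^ 2 := by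
  have hg : -⟪g, s⟫ ≤ ‖g‖ * ‖s‖ := (neg_le_abs _).trans (abs_real_inner_le_norm g s)
  have hB : -⟪s, B s⟫ ≤ ‖B‖ * ‖s‖ ^ 2 :=
    calc -⟪s, B s⟫ ≤ ‖s‖ * ‖B s‖ := (neg_le_abs _).trans (abs_real_inner_le_norm s (B s))
      _ ≤ ‖s‖ * (‖B‖ * ‖s‖) := by gcongr; exact B.le_opNorm s
      _ = ‖B‖ * ‖s‖ ^ 2 := by ring
  linarith

theorem stmt_7_general {d : ℕ} (g : EuclideanSpace ℝ (Fin d))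
    (B : EuclideanSpace ℝ (Fin d) →L[ℝ] EuclideanSpace ℝ (Fin d))
    (σ : ℝ) (hσ : 0 < σ)
    (s : EuclideanSpace ℝ (Fin d))
    (hfo : ⟪g, s⟫ + ⟪s, B s⟫ + σ * ‖s‖ ^ 3 = 0) :
    ‖s‖ ≤ (11 / 4) * max (‖B‖ / σ) (Real.sqrt (‖g‖ / σ)) := by
  have hM : 0 ≤ max (‖B‖ / σ) (Real.sqrt (‖g‖ / σ)) :=
    (Real.sqrt_nonneg _).trans (le_max_right _ _)
  calc ‖s‖ ≤ 2 * max (‖B‖ / σ) (Real.sqrt (‖g‖ / σ)) :=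
        le_two_mul_max_of_mul_pow_three_le hσ (norm_nonneg s)
          (mul_norm_pow_three_le_of_inner_add_inner_add_eq_zero hfo)
    _ ≤ (11 / 4) * max (‖B‖ / σ) (Real.sqrt (‖g‖ / σ)) := by gcongr; norm_num

/-- upper bound on the step length from the first-order termination
condition of the cubic-regularized subproblem. -/
theorem stmt_7 {d : ℕ} (g : EuclideanSpace ℝ (Fin d))
    (B : EuclideanSpace ℝ (Fin d) →L[ℝ] EuclideanSpace ℝ (Fin d))
    (hBsym : IsSelfAdjoint B) (σ : ℝ) (hσ : 0 < σ)
    (s : EuclideanSpace ℝ (Fin d))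
    (hfo : ⟪g, s⟫ + ⟪s, B s⟫ + σ * ‖s‖ ^ 3 = 0) :
    ‖s‖ ≤ (11 / 4) * max (‖B‖ / σ) (Real.sqrt (‖g‖ / σ)) :=
  stmt_7_general g B σ hσ s hfo
end

section
/- Let f : ℝ^d → ℝ be twice continuously differentiable with L_H-Lipschitz Hessian: ‖∇²f(u) − ∇²f(v)‖ ≤ L_H‖u − v‖ for all u, v. Let ĝ : ℝ^d → ℝ^d be continuously differentiable with (symmetric-matrix-valued) derivative B̂, and suppose ‖B̂(y) − ∇²f(y)‖ ≤ ε_B for every y on the segment [x, x+s]. Let B be a symmetric d×d matrix with ‖∇²f(x) − B‖ ≤ ε_B, let σ > 0, and define ∇p(s) = ĝ(x) + B s + σ‖s‖ s. If ‖∇p(s)‖ ≤ θ ‖ĝ(x)‖ for some θ ≥ 0, then ‖ĝ(x+s)‖ ≤ 2 ε_B ‖s‖ + (L_H + σ) ‖s‖² + θ ‖ĝ(x)‖. -/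
open RealInnerProductSpace

/-- bound on the inexact gradient at the next iterate from the
approximate-stationarity termination condition of the cubic subproblem.  The Hessian
of `f` at `y` is formalized as `fderiv ℝ (gradient f) y`, and the derivative `B̂` of
the inexact gradient map `ĝ` as `fderiv ℝ ĝ y`. -/
theorem stmt_9 {d : ℕ} (f : EuclideanSpace ℝ (Fin d) → ℝ) (hf : ContDiff ℝ 2 f)
    (LH : ℝ)
    (hLip : ∀ u v, ‖fderiv ℝ (gradient f) u - fderiv ℝ (gradient f) v‖ ≤ LH * ‖u - v‖)
    (gh : EuclideanSpace ℝ (Fin d) → EuclideanSpace ℝ (Fin d))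
    (hgh : ContDiff ℝ 1 gh)
    (x s : EuclideanSpace ℝ (Fin d)) (εB : ℝ)
    (hBhatSym : ∀ y ∈ segment ℝ x (x + s), IsSelfAdjoint (fderiv ℝ gh y))
    (hBhat : ∀ y ∈ segment ℝ x (x + s),
      ‖fderiv ℝ gh y - fderiv ℝ (gradient f) y‖ ≤ εB)
    (B : EuclideanSpace ℝ (Fin d) →L[ℝ] EuclideanSpace ℝ (Fin d))
    (hBsym : IsSelfAdjoint B) (hB : ‖fderiv ℝ (gradient f) x - B‖ ≤ εB)
    (σ θ : ℝ) (hσ : 0 < σ) (hθ : 0 ≤ θ)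
    (hstop : ‖gh x + B s + (σ * ‖s‖) • s‖ ≤ θ * ‖gh x‖) :
    ‖gh (x + s)‖ ≤ 2 * εB * ‖s‖ + (LH + σ) * ‖s‖ ^ 2 + θ * ‖gh x‖ := by
  set H := fun y => fderiv ℝ (gradient f) y with hH
  -- bound on ‖B̂ y - B‖ on the segment
  have hC : ∀ y ∈ segment ℝ x (x + s), ‖fderiv ℝ gh y - B‖ ≤ 2 * εB + LH * ‖s‖ := by
    intro y hy
    obtain ⟨a, b, ha, hb, hab, hyeq⟩ := hy
    have hyx : y - x = b • s := by
      rw [← hyeq]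
      have : a = 1 - b := by linarith
      rw [this]
      module
    have hnyx : ‖y - x‖ ≤ ‖s‖ := by
      rw [hyx, norm_smul, Real.norm_eq_abs, abs_of_nonneg hb]
      nlinarith [norm_nonneg s]
    have h1 : ‖fderiv ℝ gh y - H y‖ ≤ εB := hBhat y ⟨a, b, ha, hb, hab, hyeq⟩
    have h2 : ‖H y - H x‖ ≤ LH * ‖s‖ := by
      have hys : ‖H y - H x‖ ≤ LH * ‖y - x‖ := hLip y x
      have hLHs : 0 ≤ LH * ‖s‖ := by
        have h0 := hLip (x + s) x
        rw [add_sub_cancel_left] at h0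
        exact le_trans (norm_nonneg _) h0
      rcases le_or_gt 0 LH with hL | hL
      · exact hys.trans (mul_le_mul_of_nonneg_left hnyx hL)
      · nlinarith [norm_nonneg (y - x), norm_nonneg s]
    calc ‖fderiv ℝ gh y - B‖
        = ‖(fderiv ℝ gh y - H y) + (H y - H x) + (H x - B)‖ := by abel_nf
      _ ≤ ‖fderiv ℝ gh y - H y‖ + ‖H y - H x‖ + ‖H x - B‖ := norm_add₃_le
      _ ≤ εB + LH * ‖s‖ + εB := by gcongr
      _ = 2 * εB + LH * ‖s‖ := by ring
  -- mean value inequality for y ↦ gh y - B y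
  have hkey : ‖(gh (x + s) - B (x + s)) - (gh x - B x)‖ ≤ (2 * εB + LH * ‖s‖) * ‖(x + s) - x‖ := by
    refine (convex_segment x (x + s)).norm_image_sub_le_of_norm_hasFDerivWithin_le
      (f := fun z => gh z - B z) (f' := fun y => fderiv ℝ gh y - B)
      (fun y _ => ?_) hC (left_mem_segment ℝ x (x + s)) (right_mem_segment ℝ x (x + s))
    exact (((hgh.differentiable one_ne_zero y).hasFDerivAt).sub B.hasFDerivAt).hasFDerivWithinAt
  have hxs : (x + s) - x = s := add_sub_cancel_left x s
  have hkey2 : ‖gh (x + s) - gh x - B s‖ ≤ (2 * εB + LH * ‖s‖) * ‖s‖ := by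
    have hBadd : B (x + s) = B x + B s := map_add B x s
    have : (gh (x + s) - B (x + s)) - (gh x - B x) = gh (x + s) - gh x - B s := by
      rw [hBadd]; abel
    rw [this, hxs] at hkey
    exact hkey
  have hdecomp : gh (x + s)
      = (gh (x + s) - gh x - B s) + (gh x + B s + (σ * ‖s‖) • s) - (σ * ‖s‖) • s := by
    abel
  have hsm : ‖(σ * ‖s‖) • s‖ = σ * ‖s‖ ^ 2 := by
    rw [norm_smul, Real.norm_eq_abs, abs_of_nonneg (by positivity)]
    ring
  calc ‖gh (x + s)‖
      = ‖(gh (x + s) - gh x - B s) + (gh x + B s + (σ * ‖s‖) • s) - (σ * ‖s‖) • s‖ :=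
        congrArg norm hdecomp
    _ ≤ ‖(gh (x + s) - gh x - B s) + (gh x + B s + (σ * ‖s‖) • s)‖ + ‖(σ * ‖s‖) • s‖ :=
        norm_sub_le _ _
    _ ≤ ‖gh (x + s) - gh x - B s‖ + ‖gh x + B s + (σ * ‖s‖) • s‖ + ‖(σ * ‖s‖) • s‖ := by
        gcongr
        exact norm_add_le _ _
    _ ≤ (2 * εB + LH * ‖s‖) * ‖s‖ + θ * ‖gh x‖ + σ * ‖s‖ ^ 2 := by
        rw [hsm]; gcongr
    _ = 2 * εB * ‖s‖ + (LH + σ) * ‖s‖ ^ 2 + θ * ‖gh x‖ := by ring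
end

section
/- Let f : ℝ^d → ℝ be twice continuously differentiable with L_H-Lipschitz Hessian and L_{∇f}-Lipschitz gradient. Let ĝ : ℝ^d → ℝ^d be continuously differentiable with derivative B̂ satisfying ‖B̂(y) − ∇²f(y)‖ ≤ ε_B for every y on the segment [x, x+s], and suppose ‖ĝ(x) − ∇f(x)‖ ≤ ε_g and ‖ĝ(x+s) − ∇f(x+s)‖ ≤ ε_g. Let B be a symmetric d×d matrix with ‖∇²f(x) − B‖ ≤ ε_B, let σ > 0, and suppose ‖ĝ(x) + B s + σ‖s‖ s‖ ≤ θ ‖ĝ(x)‖ with 0 ≤ θ ≤ κ_θ · min{1, ‖s‖} and 0 < κ_θ < 1. Assume ‖ĝ(x+s)‖ ≥ ε_{∇f} − ε_g > 0, and that ε_B ≤ ζ₁ (ε_{∇f} − ε_g) and ε_g ≤ ζ₂ (ε_{∇f} − ε_g) with ζ₁, ζ₂ ∈ (0,1) satisfying θ + 2ζ₁ + 2κ_θζ₂ < 1. Then ‖ĝ(x+s)‖ ≤ κ_s ‖s‖², where κ_s = max{ (2ε_B + L_H + σ + 2κ_θ ε_g + κ_θ L_{∇f})/(1 − θ), (L_H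 + σ + κ_θ L_{∇f})/(1 − θ − 2ζ₁ − 2κ_θ ζ₂) }. -/
set_option maxHeartbeats 2000000


open RealInnerProductSpace

/-- in the SARC method, the inexact gradient at the next iterate is
bounded by `κ_s ‖s‖²`.  The Hessian of `f` at `y` is formalized as
`fderiv ℝ (gradient f) y`, and the derivative `B̂` of the inexact gradient map `ĝ`
as `fderiv ℝ gh y`. -/
theorem stmt_11 {d : ℕ} (f : EuclideanSpace ℝ (Fin d) → ℝ) (hf : ContDiff ℝ 2 f)
    (LH Lg : ℝ)
    (hLipH : ∀ u v, ‖fderiv ℝ (gradient f) u - fderiv ℝ (gradient f) v‖ ≤ LH * ‖u - v‖)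
    (hLipG : ∀ u v, ‖gradient f u - gradient f v‖ ≤ Lg * ‖u - v‖)
    (gh : EuclideanSpace ℝ (Fin d) → EuclideanSpace ℝ (Fin d))
    (hgh : ContDiff ℝ 1 gh)
    (x s : EuclideanSpace ℝ (Fin d)) (εB εg εf : ℝ)
    (hBhat : ∀ y ∈ segment ℝ x (x + s),
      ‖fderiv ℝ gh y - fderiv ℝ (gradient f) y‖ ≤ εB)
    (hgx : ‖gh x - gradient f x‖ ≤ εg)
    (hgxs : ‖gh (x + s) - gradient f (x + s)‖ ≤ εg)
    (B : EuclideanSpace ℝ (Fin d) →L[ℝ] EuclideanSpace ℝ (Fin d))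
    (hBsym : IsSelfAdjoint B) (hB : ‖fderiv ℝ (gradient f) x - B‖ ≤ εB)
    (σ θ κθ : ℝ) (hσ : 0 < σ)
    (hθ0 : 0 ≤ θ) (hθ : θ ≤ κθ * min 1 ‖s‖) (hκθ0 : 0 < κθ) (hκθ1 : κθ < 1)
    (hstop : ‖gh x + B s + (σ * ‖s‖) • s‖ ≤ θ * ‖gh x‖)
    (hnext : εf - εg ≤ ‖gh (x + s)‖) (hεfg : 0 < εf - εg)
    (ζ₁ ζ₂ : ℝ) (hζ₁0 : 0 < ζ₁) (hζ₁1 : ζ₁ < 1) (hζ₂0 : 0 < ζ₂) (hζ₂1 : ζ₂ < 1)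
    (hεB : εB ≤ ζ₁ * (εf - εg)) (hεg : εg ≤ ζ₂ * (εf - εg))
    (hsum : θ + 2 * ζ₁ + 2 * κθ * ζ₂ < 1) :
    ‖gh (x + s)‖ ≤
      max ((2 * εB + LH + σ + 2 * κθ * εg + κθ * Lg) / (1 - θ))
        ((LH + σ + κθ * Lg) / (1 - θ - 2 * ζ₁ - 2 * κθ * ζ₂)) * ‖s‖ ^ 2 := by
  classical
  set Hx := fderiv ℝ (gradient f) x with hHxdef
  set r := ‖s‖ with hrdef
  set N := ‖gh (x + s)‖ with hNdef
  have hr0 : (0:ℝ) ≤ r := norm_nonneg s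
  have hεB0 : 0 ≤ εB := le_trans (norm_nonneg _) hB
  have hεg0 : 0 ≤ εg := le_trans (norm_nonneg _) hgx
  have hN0 : (0:ℝ) < N := lt_of_lt_of_le hεfg hnext
  have hLg0 : 0 ≤ Lg := by
    have h1 := hLipG (gh (x+s)) 0
    have h2 : (0:ℝ) ≤ Lg * ‖gh (x+s) - 0‖ := le_trans (norm_nonneg _) h1
    have h3 : (0:ℝ) < ‖gh (x+s) - (0 : EuclideanSpace ℝ (Fin d))‖ := by
      rw [sub_zero]; exact hN0
    nlinarith
  have hLH0 : 0 ≤ LH := by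
    have h1 := hLipH (gh (x+s)) 0
    have h2 : (0:ℝ) ≤ LH * ‖gh (x+s) - 0‖ := le_trans (norm_nonneg _) h1
    have h3 : (0:ℝ) < ‖gh (x+s) - (0 : EuclideanSpace ℝ (Fin d))‖ := by
      rw [sub_zero]; exact hN0
    nlinarith
  have hθ1 : θ < 1 := by
    have : κθ * min 1 r ≤ κθ * 1 := by
      apply mul_le_mul_of_nonneg_left (min_le_left _ _) hκθ0.le
    nlinarith
  have hθr : θ ≤ κθ * r := by
    have : κθ * min 1 r ≤ κθ * r := by
      apply mul_le_mul_of_nonneg_left (min_le_right _ _) hκθ0.le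
    linarith
  -- mean value bound on the segment
  have hghdiff : ∀ y : EuclideanSpace ℝ (Fin d), DifferentiableAt ℝ gh y :=
    fun y => (hgh.differentiable one_ne_zero).differentiableAt
  have key : ‖gh (x + s) - gh x - Hx s‖ ≤ (εB + LH * r) * r := by
    set h : EuclideanSpace ℝ (Fin d) → EuclideanSpace ℝ (Fin d) :=
      fun y => gh y - Hx y with hhdef
    have hderiv : ∀ y : EuclideanSpace ℝ (Fin d),
        fderiv ℝ h y = fderiv ℝ gh y - Hx := by
      intro y
      rw [hhdef]
      rw [fderiv_fun_sub (hghdiff y) (Hx.differentiableAt)]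
      rw [Hx.fderiv]
    have hbound : ∀ y ∈ segment ℝ x (x + s), ‖fderiv ℝ h y‖ ≤ εB + LH * r := by
      intro y hy
      obtain ⟨a, b, ha, hb, hab, hy'⟩ := hy
      have hb1 : b ≤ 1 := by linarith
      have ha' : a = 1 - b := by linarith
      have hyx : y - x = b • s := by
        rw [← hy', ha']; module
      have hyxr : ‖y - x‖ ≤ r := by
        rw [hyx, norm_smul, Real.norm_eq_abs, abs_of_nonneg hb]
        nlinarith
      rw [hderiv y]
      calc ‖fderiv ℝ gh y - Hx‖
          ≤ ‖fderiv ℝ gh y - fderiv ℝ (gradient f) y‖ +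
            ‖fderiv ℝ (gradient f) y - Hx‖ := norm_sub_le_norm_sub_add_norm_sub _ _ _
        _ ≤ εB + LH * r := by
            have h1 := hBhat y ⟨a, b, ha, hb, hab, hy'⟩
            have h2 := hLipH y x
            have h3 : LH * ‖y - x‖ ≤ LH * r := by
              apply mul_le_mul_of_nonneg_left hyxr hLH0
            rw [hHxdef]
            linarith
    have hmvt := (convex_segment x (x + s)).norm_image_sub_le_of_norm_fderiv_le
      (fun y _ => (hghdiff y).fun_sub Hx.differentiableAt) hbound
      (left_mem_segment ℝ x (x + s)) (right_mem_segment ℝ x (x + s))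
    have heq : h (x + s) - h x = gh (x + s) - gh x - Hx s := by
      simp only [hhdef, map_add]
      abel
    have heq2 : (x + s) - x = s := add_sub_cancel_left x s
    rw [heq, heq2] at hmvt
    exact hmvt
  -- bound on ‖Hx s - B s‖
  have t2 : ‖Hx s - B s‖ ≤ εB * r := by
    have : Hx s - B s = (Hx - B) s := by
      simp [ContinuousLinearMap.sub_apply]
    rw [this]
    calc ‖(Hx - B) s‖ ≤ ‖Hx - B‖ * ‖s‖ := (Hx - B).le_opNorm s
      _ ≤ εB * r := by
          apply mul_le_mul_of_nonneg_right hB (norm_nonneg s)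
  have t4 : ‖(σ * r) • s‖ = σ * r ^ 2 := by
    rw [norm_smul, Real.norm_eq_abs, abs_of_nonneg (by positivity : (0:ℝ) ≤ σ * r)]
    ring
  -- bound on ‖gh x‖
  have t5 : ‖gh x‖ ≤ N + 2 * εg + Lg * r := by
    have e1 : ‖gh x‖ ≤ ‖gh x - gradient f x‖ + ‖gradient f x‖ := by
      calc ‖gh x‖ = ‖(gh x - gradient f x) + gradient f x‖ := by rw [sub_add_cancel]
        _ ≤ _ := norm_add_le _ _
    have e2 : ‖gradient f x‖ ≤ ‖gradient f x - gradient f (x + s)‖ + ‖gradient f (x + s)‖ := by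
      calc ‖gradient f x‖ = ‖(gradient f x - gradient f (x + s)) + gradient f (x + s)‖ := by
            rw [sub_add_cancel]
        _ ≤ _ := norm_add_le _ _
    have e3 : ‖gradient f x - gradient f (x + s)‖ ≤ Lg * r := by
      have := hLipG x (x + s)
      have hxs : ‖x - (x + s)‖ = r := by
        rw [hrdef]
        simp [norm_sub_rev]
      rw [hxs] at this
      exact this
    have e4 : ‖gradient f (x + s)‖ ≤ εg + N := by
      calc ‖gradient f (x + s)‖ = ‖(gradient f (x + s) - gh (x + s)) + gh (x + s)‖ := by
            rw [sub_add_cancel]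
        _ ≤ ‖gradient f (x + s) - gh (x + s)‖ + N := norm_add_le _ _
        _ ≤ εg + N := by
            rw [norm_sub_rev]
            linarith [hgxs]
    linarith
  -- main inequality
  have main : N ≤ 2 * εB * r + (LH + σ) * r ^ 2 + θ * (N + 2 * εg + Lg * r) := by
    have edecomp : gh (x + s) =
        (gh (x + s) - gh x - Hx s) + (Hx s - B s) + (gh x + B s + (σ * r) • s)
          + (-((σ * r) • s)) := by
      abel
    have tri : N ≤ ‖gh (x + s) - gh x - Hx s‖ + ‖Hx s - B s‖ +
        ‖gh x + B s + (σ * r) • s‖ + ‖(σ * r) • s‖ := by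
      rw [hNdef]
      calc ‖gh (x + s)‖ = ‖(gh (x + s) - gh x - Hx s) + (Hx s - B s) +
            (gh x + B s + (σ * r) • s) + (-((σ * r) • s))‖ := by rw [← edecomp]
        _ ≤ ‖(gh (x + s) - gh x - Hx s) + (Hx s - B s) +
            (gh x + B s + (σ * r) • s)‖ + ‖-((σ * r) • s)‖ := norm_add_le _ _
        _ ≤ ‖(gh (x + s) - gh x - Hx s) + (Hx s - B s)‖ +
            ‖gh x + B s + (σ * r) • s‖ + ‖-((σ * r) • s)‖ := by
              gcongr
              exact norm_add_le _ _
        _ ≤ _ := by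
              rw [norm_neg]
              gcongr
              exact norm_add_le _ _
    have hstop' : ‖gh x + B s + (σ * r) • s‖ ≤ θ * ‖gh x‖ := hstop
    have hghx : θ * ‖gh x‖ ≤ θ * (N + 2 * εg + Lg * r) := by
      apply mul_le_mul_of_nonneg_left t5 hθ0
    nlinarith [key, t2, t4, tri]
  -- now case split on r vs 1
  have hmax : ∀ C : ℝ, (C ≤ max ((2 * εB + LH + σ + 2 * κθ * εg + κθ * Lg) / (1 - θ))
      ((LH + σ + κθ * Lg) / (1 - θ - 2 * ζ₁ - 2 * κθ * ζ₂))) →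
      N ≤ C * r ^ 2 → N ≤ max ((2 * εB + LH + σ + 2 * κθ * εg + κθ * Lg) / (1 - θ))
      ((LH + σ + κθ * Lg) / (1 - θ - 2 * ζ₁ - 2 * κθ * ζ₂)) * r ^ 2 := by
    intro C hC hNC
    calc N ≤ C * r ^ 2 := hNC
      _ ≤ _ := by
          apply mul_le_mul_of_nonneg_right hC (sq_nonneg r)
  have mexp : θ * (N + 2 * εg + Lg * r) = θ * N + θ * (2 * εg) + θ * (Lg * r) := by
    ring
  rw [mexp] at main
  rcases le_or_gt 1 r with hr1 | hr1
  · -- case r ≥ 1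
    apply hmax _ (le_max_left _ _)
    rw [div_mul_eq_mul_div, le_div_iff₀ (by linarith)]
    have hrr : r ≤ r ^ 2 := by nlinarith
    have h1 : θ * (2 * εg) ≤ 2 * κθ * εg * r ^ 2 := by
      calc θ * (2 * εg) ≤ (κθ * r) * (2 * εg) :=
            mul_le_mul_of_nonneg_right hθr (by linarith)
        _ = (2 * κθ * εg) * r := by ring
        _ ≤ (2 * κθ * εg) * r ^ 2 :=
            mul_le_mul_of_nonneg_left hrr (by positivity)
        _ = 2 * κθ * εg * r ^ 2 := by ring
    have h2 : θ * (Lg * r) ≤ κθ * Lg * r ^ 2 := by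
      calc θ * (Lg * r) ≤ (κθ * r) * (Lg * r) :=
            mul_le_mul_of_nonneg_right hθr (mul_nonneg hLg0 hr0)
        _ = κθ * Lg * r ^ 2 := by ring
    have h3 : 2 * εB * r ≤ 2 * εB * r ^ 2 := by
      calc 2 * εB * r = (2 * εB) * r := by ring
        _ ≤ (2 * εB) * r ^ 2 := mul_le_mul_of_nonneg_left hrr (by positivity)
        _ = 2 * εB * r ^ 2 := by ring
    have final : N - θ * N ≤ (2 * εB + LH + σ + 2 * κθ * εg + κθ * Lg) * r ^ 2 := by
      linarith only [main, h1, h2, h3]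
    linarith only [final]
  · -- case r < 1
    apply hmax _ (le_max_right _ _)
    have hD : (0:ℝ) < 1 - θ - 2 * ζ₁ - 2 * κθ * ζ₂ := by nlinarith
    rw [div_mul_eq_mul_div, le_div_iff₀ hD]
    have hεBN : 2 * εB * r ≤ 2 * ζ₁ * N := by
      have h1 : εB ≤ ζ₁ * N :=
        le_trans hεB (mul_le_mul_of_nonneg_left hnext hζ₁0.le)
      have h4 : εB * r ≤ εB * 1 := mul_le_mul_of_nonneg_left hr1.le hεB0
      nlinarith [h1, h4]
    have hεgN : θ * (2 * εg) ≤ 2 * κθ * ζ₂ * N := by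
      have h1 : εg ≤ ζ₂ * N :=
        le_trans hεg (mul_le_mul_of_nonneg_left hnext hζ₂0.le)
      have hθκ : θ ≤ κθ := by
        have h3 : κθ * r ≤ κθ * 1 := mul_le_mul_of_nonneg_left hr1.le hκθ0.le
        linarith
      calc θ * (2 * εg) ≤ κθ * (2 * εg) :=
            mul_le_mul_of_nonneg_right hθκ (by linarith)
        _ ≤ κθ * (2 * (ζ₂ * N)) := mul_le_mul_of_nonneg_left (by linarith) hκθ0.le
        _ = 2 * κθ * ζ₂ * N := by ring
    have h2 : θ * (Lg * r) ≤ κθ * Lg * r ^ 2 := by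
      calc θ * (Lg * r) ≤ (κθ * r) * (Lg * r) :=
            mul_le_mul_of_nonneg_right hθr (mul_nonneg hLg0 hr0)
        _ = κθ * Lg * r ^ 2 := by ring
    have final : N - θ * N - 2 * ζ₁ * N - 2 * κθ * ζ₂ * N ≤ (LH + σ + κθ * Lg) * r ^ 2 := by
      linarith only [main, hεBN, hεgN, h2]
    linarith only [final]
end

section
/- Let f, h : ℝ^d → ℝ be twice continuously differentiable with ∇²f being L_H-Lipschitz. Fix x, s ∈ ℝ^d and σ > 0. Let g ∈ ℝ^d with ‖∇f(x) − g‖ ≤ ε_g and let B be a symmetric d×d matrix with ‖∇²f(x) − B‖ ≤ ε_B. Suppose ‖∇h(x) − ∇f(x)‖ ≤ ε₁ and ‖∇²h(y) − ∇²f(y)‖ ≤ ε₂ for every y on the segment [x, x+s]. Then, with p(u) = h(x) + ⟨g,u⟩ + ½⟨u,Bu⟩ + (σ/3)‖u‖³, one has p(0) − p(s) − (h(x) − h(x+s)) ≤ 2(ε₁ + ε_g)‖s‖ + (3/2)(ε₂ + ε_B)‖s‖² + ((3/2) L_H − σ/3)‖s‖³. If in addition ∇h(x) = g, the first term may be dropped.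 -/
open RealInnerProductSpace

/-- bound on the gap between the cubic-model decrease and the decrease
of the inexact function `h`.  The Hessian of `f` at `y` is formalized as
`fderiv ℝ (gradient f) y`. -/
theorem stmt_12 {d : ℕ} (f h : EuclideanSpace ℝ (Fin d) → ℝ)
    (hf : ContDiff ℝ 2 f) (hh : ContDiff ℝ 2 h)
    (LH : ℝ)
    (hLip : ∀ u v, ‖fderiv ℝ (gradient f) u - fderiv ℝ (gradient f) v‖ ≤ LH * ‖u - v‖)
    (x s : EuclideanSpace ℝ (Fin d)) (σ : ℝ) (hσ : 0 < σ)
    (g : EuclideanSpace ℝ (Fin d)) (εg εB ε₁ ε₂ : ℝ)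
    (hg : ‖gradient f x - g‖ ≤ εg)
    (B : EuclideanSpace ℝ (Fin d) →L[ℝ] EuclideanSpace ℝ (Fin d))
    (hBsym : IsSelfAdjoint B) (hB : ‖fderiv ℝ (gradient f) x - B‖ ≤ εB)
    (h1 : ‖gradient h x - gradient f x‖ ≤ ε₁)
    (h2 : ∀ y ∈ segment ℝ x (x + s),
      ‖fderiv ℝ (gradient h) y - fderiv ℝ (gradient f) y‖ ≤ ε₂)
    (p : EuclideanSpace ℝ (Fin d) → ℝ)
    (hp : ∀ u, p u = h x + ⟪g, u⟫ + (1 / 2) * ⟪u, B u⟫ + (σ / 3) * ‖u‖ ^ 3) :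
    p 0 - p s - (h x - h (x + s)) ≤
        2 * (ε₁ + εg) * ‖s‖ + (3 / 2) * (ε₂ + εB) * ‖s‖ ^ 2
          + ((3 / 2) * LH - σ / 3) * ‖s‖ ^ 3
      ∧ (gradient h x = g →
          p 0 - p s - (h x - h (x + s)) ≤
            (3 / 2) * (ε₂ + εB) * ‖s‖ ^ 2 + ((3 / 2) * LH - σ / 3) * ‖s‖ ^ 3) := by
  rcases eq_or_ne s 0 with hs0 | hs0
  · subst hs0
    refine ⟨?_, fun _ => ?_⟩ <;> simp
  have hsn : 0 < ‖s‖ := norm_pos_iff.mpr hs0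
  have hεg : 0 ≤ εg := le_trans (norm_nonneg _) hg
  have hεB : 0 ≤ εB := le_trans (norm_nonneg _) hB
  have hε₁ : 0 ≤ ε₁ := le_trans (norm_nonneg _) h1
  have hε₂ : 0 ≤ ε₂ := le_trans (norm_nonneg _) (h2 x (left_mem_segment ℝ x (x + s)))
  have hLH : 0 ≤ LH := by
    have h0 := le_trans (norm_nonneg _) (hLip (x + s) x)
    rw [add_sub_cancel_left] at h0
    nlinarith
  have hdh : Differentiable ℝ h := hh.differentiable two_ne_zero
  have hgradh : ContDiff ℝ 1 (gradient h) := by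
    have hfd1 : ContDiff ℝ 1 (fun y => fderiv ℝ h y) :=
      hh.fderiv_right (by norm_num)
    exact ((InnerProductSpace.toDual ℝ
      (EuclideanSpace ℝ (Fin d))).symm.contDiff).comp hfd1
  have hdgh : Differentiable ℝ (gradient h) := hgradh.differentiable one_ne_zero
  set C : ℝ := ε₂ + εB + LH * ‖s‖ with hCdef
  have hC : 0 ≤ C := by positivity
  have hseg_sub : ∀ z ∈ segment ℝ x (x + s), ‖z - x‖ ≤ ‖s‖ := by
    intro z hz
    rw [segment_eq_image'] at hz
    obtain ⟨t, ⟨ht0, ht1⟩, rfl⟩ := hz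
    rw [add_sub_cancel_left, add_sub_cancel_left, norm_smul, Real.norm_eq_abs,
      abs_of_nonneg ht0]
    exact mul_le_of_le_one_left (norm_nonneg s) ht1
  -- Step 1: bound the gradient increment
  have key1 : ∀ y ∈ segment ℝ x (x + s),
      ‖gradient h y - gradient h x - B (y - x)‖ ≤ C * ‖y - x‖ := by
    intro y hy
    have hbd : ∀ z ∈ segment ℝ x (x + s), ‖fderiv ℝ (gradient h) z - B‖ ≤ C := by
      intro z hz
      have e : fderiv ℝ (gradient h) z - B
          = (fderiv ℝ (gradient h) z - fderiv ℝ (gradient f) z)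
            + (fderiv ℝ (gradient f) z - fderiv ℝ (gradient f) x)
            + (fderiv ℝ (gradient f) x - B) := by abel
      rw [e]
      have hlip := (hLip z x).trans (mul_le_mul_of_nonneg_left (hseg_sub z hz) hLH)
      calc ‖_ + _ + _‖ ≤ ‖fderiv ℝ (gradient h) z - fderiv ℝ (gradient f) z‖
            + ‖fderiv ℝ (gradient f) z - fderiv ℝ (gradient f) x‖
            + ‖fderiv ℝ (gradient f) x - B‖ := norm_add₃_le
        _ ≤ ε₂ + LH * ‖s‖ + εB := add_le_add (add_le_add (h2 z hz) hlip) hB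
        _ = C := by rw [hCdef]; ring
    have hmv := (convex_segment x (x + s)).norm_image_sub_le_of_norm_hasFDerivWithin_le
      (f := fun z => gradient h z - B z)
      (f' := fun z => fderiv ℝ (gradient h) z - B)
      (fun z _ => ((hdgh z).hasFDerivAt.sub B.hasFDerivAt).hasFDerivWithinAt)
      hbd (left_mem_segment ℝ x (x + s)) hy
    have e2 : gradient h y - B y - (gradient h x - B x)
        = gradient h y - gradient h x - B (y - x) := by rw [map_sub]; abel
    rwa [e2] at hmv
  -- inner-product form of the derivative of h
  have hfd : ∀ y v, fderiv ℝ h y v = ⟪gradient h y, v⟫ := by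
    intro y v
    rw [show fderiv ℝ h y = InnerProductSpace.toDual ℝ _ (gradient h y) from
      ((InnerProductSpace.toDual ℝ _).apply_symm_apply _).symm]
    exact InnerProductSpace.toDual_apply_apply
  have hline : ∀ t : ℝ, HasDerivAt (fun t : ℝ => x + t • s) s t := by
    intro t
    simpa using ((hasDerivAt_id t).smul_const s).const_add x
  -- Step 2: one-dimensional mean value argument
  have hq : ∀ t : ℝ, HasDerivAt
      (fun t : ℝ => h (x + t • s) - t * ⟪gradient h x, s⟫ - t ^ 2 / 2 * ⟪s, B s⟫)
      (⟪gradient h (x + t • s) - gradient h x - B (t • s), s⟫) t := by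
    intro t
    have h1' : HasDerivAt (fun t : ℝ => h (x + t • s)) (⟪gradient h (x + t • s), s⟫) t := by
      have := (hdh (x + t • s)).hasFDerivAt.comp_hasDerivAt t (hline t)
      rw [hfd] at this; exact this
    have h2' : HasDerivAt (fun t : ℝ => t * ⟪gradient h x, s⟫) ⟪gradient h x, s⟫ t :=
      hasDerivAt_mul_const _
    have h3' : HasDerivAt (fun t : ℝ => t ^ 2 / 2 * ⟪s, B s⟫) (t * ⟪s, B s⟫) t := by
      have hpow := (hasDerivAt_pow 2 t).mul_const (⟪s, B s⟫ / 2)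
      have e1 : (fun t : ℝ => t ^ 2 / 2 * ⟪s, B s⟫)
          = fun t : ℝ => t ^ 2 * (⟪s, B s⟫ / 2) := by funext u; ring
      rw [e1]
      refine hpow.congr_deriv ?_
      norm_num; ring
    have hcomb := (h1'.sub h2').sub h3'
    refine hcomb.congr_deriv ?_
    rw [inner_sub_left, inner_sub_left]
    have e3 : ⟪B (t • s), s⟫ = t * ⟪s, B s⟫ := by
      rw [map_smul, real_inner_smul_left, real_inner_comm]
    rw [e3]
  have hmem : ∀ t ∈ Set.Icc (0:ℝ) 1, x + t • s ∈ segment ℝ x (x + s) := by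
    intro t ht
    rw [segment_eq_image']
    exact ⟨t, ht, by rw [add_sub_cancel_left]⟩
  have hbound : ∀ t ∈ Set.Icc (0:ℝ) 1,
      ‖⟪gradient h (x + t • s) - gradient h x - B (t • s), s⟫‖ ≤ C * ‖s‖ * ‖s‖ := by
    intro t ht
    have hy := key1 _ (hmem t ht)
    rw [add_sub_cancel_left] at hy
    have hts : ‖t • s‖ ≤ ‖s‖ := by
      rw [norm_smul, Real.norm_eq_abs, abs_of_nonneg ht.1]
      exact mul_le_of_le_one_left (norm_nonneg s) ht.2
    calc ‖⟪gradient h (x + t • s) - gradient h x - B (t • s), s⟫‖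
        ≤ ‖gradient h (x + t • s) - gradient h x - B (t • s)‖ * ‖s‖ := by
          rw [Real.norm_eq_abs]; exact abs_real_inner_le_norm _ _
      _ ≤ C * ‖t • s‖ * ‖s‖ := mul_le_mul_of_nonneg_right hy (norm_nonneg s)
      _ ≤ C * ‖s‖ * ‖s‖ := by gcongr
  have hmvt := Convex.norm_image_sub_le_of_norm_hasDerivWithin_le
    (f := fun t : ℝ => h (x + t • s) - t * ⟪gradient h x, s⟫ - t ^ 2 / 2 * ⟪s, B s⟫)
    (f' := fun t : ℝ => ⟪gradient h (x + t • s) - gradient h x - B (t • s), s⟫)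
    (fun t _ => (hq t).hasDerivWithinAt) hbound (convex_Icc 0 1)
    (Set.left_mem_Icc.mpr zero_le_one) (Set.right_mem_Icc.mpr zero_le_one)
  have key2 : h (x + s) - h x - ⟪gradient h x, s⟫ - ⟪s, B s⟫ / 2
      ≤ (ε₂ + εB) * ‖s‖ ^ 2 + LH * ‖s‖ ^ 3 := by
    have e : (h (x + (1:ℝ) • s) - 1 * ⟪gradient h x, s⟫ - (1:ℝ) ^ 2 / 2 * ⟪s, B s⟫)
        - (h (x + (0:ℝ) • s) - 0 * ⟪gradient h x, s⟫ - (0:ℝ) ^ 2 / 2 * ⟪s, B s⟫)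
        = h (x + s) - h x - ⟪gradient h x, s⟫ - ⟪s, B s⟫ / 2 := by
      rw [one_smul, zero_smul, add_zero]; ring
    have h10 := hmvt
    rw [e] at h10
    have habs := (le_abs_self _).trans (by rwa [Real.norm_eq_abs] at h10)
    have e2 : C * ‖s‖ * ‖s‖ * ‖(1:ℝ) - 0‖ = (ε₂ + εB) * ‖s‖ ^ 2 + LH * ‖s‖ ^ 3 := by
      rw [hCdef]; norm_num; ring
    rw [e2] at habs
    exact habs
  have hgap : ‖gradient h x - g‖ ≤ ε₁ + εg := by
    have e : gradient h x - g = (gradient h x - gradient f x) + (gradient f x - g) := by abel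
    rw [e]; exact (norm_add_le _ _).trans (add_le_add h1 hg)
  have hinner : ⟪gradient h x - g, s⟫ ≤ (ε₁ + εg) * ‖s‖ :=
    (real_inner_le_norm _ _).trans (mul_le_mul_of_nonneg_right hgap (norm_nonneg s))
  have hLHS : p 0 - p s - (h x - h (x + s)) =
      (h (x + s) - h x - ⟪gradient h x, s⟫ - ⟪s, B s⟫ / 2)
        + ⟪gradient h x - g, s⟫ - σ / 3 * ‖s‖ ^ 3 := by
    have hp0 : p 0 = h x := by rw [hp 0]; simp
    rw [hp0, hp s, inner_sub_left]; ring
  have hprod1 : 0 ≤ (ε₁ + εg) * ‖s‖ := by positivity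
  have hprod2 : 0 ≤ (ε₂ + εB) * ‖s‖ ^ 2 := by positivity
  have hprod3 : 0 ≤ LH * ‖s‖ ^ 3 := by positivity
  constructor
  · rw [hLHS]; linarith
  · intro hgx
    rw [hgx] at key2
    rw [hLHS, hgx, sub_self, inner_zero_left]
    linarith
end

section
/- Let f₁,…,fₙ : ℝ^d → ℝ be differentiable, let f = (1/n)∑_{i=1}^n fᵢ, and fix x ∈ ℝ^d. Suppose (1/n)∑_{i=1}^n ‖∇fᵢ(x) − ∇f(x)‖² ≤ H₁². Fix 1 ≤ A ≤ n, let 𝒜 be a uniformly random subset of {1,…,n} of cardinality A, and set h = (1/A)∑_{i∈𝒜} fᵢ. Then E_𝒜 ‖∇h(x) − ∇f(x)‖² ≤ (𝟙[A < n]/A) · H₁², where 𝟙[A<n] equals 1 if A < n and 0 if A = n. -/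
open Finset

section Counting
variable {α : Type*} [DecidableEq α]

lemma count_single (s : Finset α) {i : α} (hi : i ∈ s) (k : ℕ) :
    ((Finset.powersetCard (k+1) s).filter (fun S => i ∈ S)).card
      = (Finset.powersetCard k (s.erase i)).card := by
  refine Finset.card_bij' (fun S _ => S.erase i) (fun T _ => insert i T) ?_ ?_ ?_ ?_
  · intro S hS
    simp only [mem_filter, mem_powersetCard] at hS
    obtain ⟨⟨hsub, hcard⟩, hiS⟩ := hS
    simp only [mem_powersetCard]
    exact ⟨erase_subset_erase _ hsub, by rw [card_erase_of_mem hiS, hcard]; rfl⟩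
  · intro T hT
    simp only [mem_powersetCard] at hT
    obtain ⟨hsub, hcard⟩ := hT
    have hiT : i ∉ T := fun h => (notMem_erase i s) (hsub h)
    simp only [mem_filter, mem_powersetCard]
    refine ⟨⟨?_, ?_⟩, mem_insert_self _ _⟩
    · intro a ha
      rcases mem_insert.1 ha with rfl | h
      · exact hi
      · exact (erase_subset _ _) (hsub h)
    · rw [card_insert_of_notMem hiT, hcard]
  · intro S hS
    simp only [mem_filter] at hS
    exact insert_erase hS.2
  · intro T hT
    simp only [mem_powersetCard] at hT
    have hiT : i ∉ T := fun h => (notMem_erase i s) (hT.1 h)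
    exact erase_insert hiT

lemma count_pair_step (s : Finset α) {i j : α} (hi : i ∈ s) (hij : j ≠ i) (k : ℕ) :
    ((Finset.powersetCard (k+1) s).filter (fun S => i ∈ S ∧ j ∈ S)).card
      = ((Finset.powersetCard k (s.erase i)).filter (fun T => j ∈ T)).card := by
  refine Finset.card_bij' (fun S _ => S.erase i) (fun T _ => insert i T) ?_ ?_ ?_ ?_
  · intro S hS
    simp only [mem_filter, mem_powersetCard] at hS
    obtain ⟨⟨hsub, hcard⟩, hiS, hjS⟩ := hS
    simp only [mem_filter, mem_powersetCard, mem_erase]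
    exact ⟨⟨erase_subset_erase _ hsub, by rw [card_erase_of_mem hiS, hcard]; rfl⟩, hij, hjS⟩
  · intro T hT
    simp only [mem_filter, mem_powersetCard] at hT
    obtain ⟨⟨hsub, hcard⟩, hjT⟩ := hT
    have hiT : i ∉ T := fun h => (notMem_erase i s) (hsub h)
    simp only [mem_filter, mem_powersetCard]
    refine ⟨⟨?_, ?_⟩, mem_insert_self _ _, mem_insert_of_mem hjT⟩
    · intro a ha
      rcases mem_insert.1 ha with rfl | h
      · exact hi
      · exact (erase_subset _ _) (hsub h)
    · rw [card_insert_of_notMem hiT, hcard]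
  · intro S hS
    simp only [mem_filter] at hS
    exact insert_erase hS.2.1
  · intro T hT
    simp only [mem_filter, mem_powersetCard] at hT
    have hiT : i ∉ T := fun h => (notMem_erase i s) (hT.1.1 h)
    exact erase_insert hiT

lemma double_swap [Fintype α] (P : Finset (Finset α)) (c : α → α → ℝ) :
    ∑ S ∈ P, ∑ i ∈ S, ∑ j ∈ S, c i j
      = ∑ i : α, ∑ j : α, ((P.filter (fun S => i ∈ S ∧ j ∈ S)).card : ℝ) * c i j := by
  have h1 : ∀ (g : α → ℝ) (S : Finset α), ∑ j ∈ S, g j = ∑ j : α, if j ∈ S then g j else 0 := by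
    intro g S
    rw [Finset.sum_ite_mem, univ_inter]
  calc ∑ S ∈ P, ∑ i ∈ S, ∑ j ∈ S, c i j
      = ∑ S ∈ P, ∑ i : α, ∑ j : α, (if i ∈ S ∧ j ∈ S then c i j else 0) := by
        refine Finset.sum_congr rfl fun S _ => ?_
        rw [h1 (fun i => ∑ j ∈ S, c i j) S]
        refine Finset.sum_congr rfl fun i _ => ?_
        split_ifs with hi
        · rw [h1 (fun j => c i j) S]
          refine Finset.sum_congr rfl fun j _ => ?_
          simp [hi]
        · simp [hi]
    _ = ∑ i : α, ∑ j : α, ∑ S ∈ P, (if i ∈ S ∧ j ∈ S then c i j else 0) := by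
        rw [Finset.sum_comm]
        exact Finset.sum_congr rfl fun i _ => Finset.sum_comm
    _ = ∑ i : α, ∑ j : α, ((P.filter (fun S => i ∈ S ∧ j ∈ S)).card : ℝ) * c i j := by
        refine Finset.sum_congr rfl fun i _ => Finset.sum_congr rfl fun j _ => ?_
        rw [← Finset.sum_filter, Finset.sum_const, nsmul_eq_mul]

end Counting

lemma grad_lin {d n : ℕ} (f : Fin n → EuclideanSpace ℝ (Fin d) → ℝ)
    (hdiff : ∀ i, Differentiable ℝ (f i)) (x : EuclideanSpace ℝ (Fin d))
    (c : ℝ) (S : Finset (Fin n)) :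
    gradient (fun y => c * ∑ i ∈ S, f i y) x = c • ∑ i ∈ S, gradient (f i) x := by
  have hds : DifferentiableAt ℝ (fun y => ∑ i ∈ S, f i y) x :=
    DifferentiableAt.fun_sum (fun i _ => (hdiff i).differentiableAt)
  simp only [gradient]
  rw [fderiv_const_mul hds, fderiv_fun_sum (fun i _ => (hdiff i).differentiableAt),
    map_smul, map_sum]

/-- variance bound for the gradient of the subsampled function
`h = (1/A) ∑_{i∈𝒜} fᵢ` over a uniformly random subset `𝒜 ⊆ {1,…,n}` of cardinality
`A`: `E ‖∇h(x) − ∇f(x)‖² ≤ (𝟙[A<n]/A)·H₁²`. -/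
theorem stmt_17 {d n : ℕ} (f : Fin n → EuclideanSpace ℝ (Fin d) → ℝ)
    (hdiff : ∀ i, Differentiable ℝ (f i))
    (x : EuclideanSpace ℝ (Fin d)) (H₁ : ℝ)
    (hvar : (1 / n : ℝ) * ∑ i, ‖gradient (f i) x
        - gradient (fun y => (1 / n : ℝ) * ∑ j, f j y) x‖ ^ 2 ≤ H₁ ^ 2)
    (A : ℕ) (hA1 : 1 ≤ A) (hAn : A ≤ n) :
    (∑ S ∈ Finset.powersetCard A (Finset.univ : Finset (Fin n)),
        ‖gradient (fun y => (A : ℝ)⁻¹ * ∑ i ∈ S, f i y) x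
          - gradient (fun y => (1 / n : ℝ) * ∑ j, f j y) x‖ ^ 2) /
      ((Finset.powersetCard A (Finset.univ : Finset (Fin n))).card : ℝ)
      ≤ ((if A < n then (1 : ℝ) else 0) / (A : ℝ)) * H₁ ^ 2 := by
  classical
  have hn : 0 < n := lt_of_lt_of_le hA1 hAn
  have hn0 : (n : ℝ) ≠ 0 := Nat.cast_ne_zero.2 hn.ne'
  have hA0 : (A : ℝ) ≠ 0 := Nat.cast_ne_zero.2 (by omega)
  set G := gradient (fun y => (1 / (n : ℝ)) * ∑ j, f j y) x with hG
  set g : Fin n → EuclideanSpace ℝ (Fin d) := fun i => gradient (f i) x with hg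
  set u : Fin n → EuclideanSpace ℝ (Fin d) := fun i => g i - G with hu
  have hGs : G = (1 / (n : ℝ)) • ∑ j, g j := grad_lin f hdiff x _ univ
  have husum : ∑ i, u i = 0 := by
    simp only [hu, Finset.sum_sub_distrib, Finset.sum_const, card_univ, Fintype.card_fin]
    rw [hGs, ← Nat.cast_smul_eq_nsmul ℝ, smul_smul,
      show (n : ℝ) * (1 / n) = 1 by field_simp, one_smul, sub_self]
  -- rewrite each summand
  have hterm : ∀ S ∈ Finset.powersetCard A (Finset.univ : Finset (Fin n)),
      ‖gradient (fun y => (A : ℝ)⁻¹ * ∑ i ∈ S, f i y) x - G‖ ^ 2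
        = ((A : ℝ)⁻¹) ^ 2 * ‖∑ i ∈ S, u i‖ ^ 2 := by
    intro S hS
    have hcard : S.card = A := (Finset.mem_powersetCard.1 hS).2
    have h1 : gradient (fun y => (A : ℝ)⁻¹ * ∑ i ∈ S, f i y) x
        = (A : ℝ)⁻¹ • ∑ i ∈ S, g i := grad_lin f hdiff x _ S
    have h2 : ∑ i ∈ S, u i = (∑ i ∈ S, g i) - (A : ℝ) • G := by
      simp only [hu, Finset.sum_sub_distrib, Finset.sum_const, hcard]
      rw [← Nat.cast_smul_eq_nsmul ℝ]
    have h3 : (A : ℝ)⁻¹ • (∑ i ∈ S, u i) = (A : ℝ)⁻¹ • (∑ i ∈ S, g i) - G := by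
      rw [h2, smul_sub, smul_smul, inv_mul_cancel₀ hA0, one_smul]
    rw [h1, ← h3, norm_smul, mul_pow, Real.norm_eq_abs, abs_of_nonneg (by positivity)]
  rw [Finset.sum_congr rfl hterm, ← Finset.mul_sum]
  set T := ∑ S ∈ Finset.powersetCard A (Finset.univ : Finset (Fin n)), ‖∑ i ∈ S, u i‖ ^ 2
    with hTdef
  rcases eq_or_lt_of_le hAn with rfl | hlt
  · -- A = n : the only subset is univ, and the sum of u vanishes
    have hP : Finset.powersetCard A (Finset.univ : Finset (Fin A))
        = {(Finset.univ : Finset (Fin A))} := by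
      ext S
      simp only [Finset.mem_powersetCard, Finset.mem_singleton]
      constructor
      · rintro ⟨-, hc⟩
        exact Finset.eq_univ_of_card S (by simpa using hc)
      · rintro rfl
        exact ⟨le_refl _, by simp⟩
    have hT0 : T = 0 := by
      rw [hTdef, hP, Finset.sum_singleton, husum]
      simp
    rw [hT0, if_neg (lt_irrefl A)]
    simp
  · -- A < n
    obtain ⟨k, rfl⟩ : ∃ k, A = k + 1 := ⟨A - 1, by omega⟩
    obtain ⟨m, rfl⟩ : ∃ m, n = m + 1 := ⟨n - 1, by omega⟩
    rw [if_pos hlt]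
    -- diagonal count
    have hNi : ∀ i : Fin (m+1),
        ((Finset.powersetCard (k+1) (Finset.univ : Finset (Fin (m+1)))).filter
          (fun S => i ∈ S ∧ i ∈ S)).card = m.choose k := by
      intro i
      have hfc : (Finset.powersetCard (k+1) (Finset.univ : Finset (Fin (m+1)))).filter
            (fun S => i ∈ S ∧ i ∈ S)
          = (Finset.powersetCard (k+1) (Finset.univ : Finset (Fin (m+1)))).filter
            (fun S => i ∈ S) := by
        apply Finset.filter_congr
        intro S _
        simp
      rw [hfc, count_single Finset.univ (mem_univ i) k, Finset.card_powersetCard,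
        card_erase_of_mem (mem_univ i), card_univ, Fintype.card_fin]
      simp
    -- off-diagonal count is constant
    set b : ℕ := if k = 0 then 0 else (m - 1).choose (k - 1) with hbdef
    have hNij : ∀ i j : Fin (m+1), i ≠ j →
        ((Finset.powersetCard (k+1) (Finset.univ : Finset (Fin (m+1)))).filter
          (fun S => i ∈ S ∧ j ∈ S)).card = b := by
      intro i j hij
      rw [count_pair_step Finset.univ (mem_univ i) hij.symm k]
      cases k with
      | zero =>
        rw [Finset.powersetCard_zero, Finset.filter_singleton,
          if_neg (Finset.notMem_empty j)]
        simp [hbdef]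
      | succ l =>
        rw [count_single (Finset.univ.erase i) (mem_erase.2 ⟨hij.symm, mem_univ j⟩) l,
          Finset.card_powersetCard, card_erase_of_mem (mem_erase.2 ⟨hij.symm, mem_univ j⟩),
          card_erase_of_mem (mem_univ i), card_univ, Fintype.card_fin, hbdef]
        have h4 : m + 1 - 1 - 1 = m - 1 := by omega
        rw [h4, if_neg (Nat.succ_ne_zero l)]
        simp
    -- expand T via inner products
    have hTsum : T = ∑ i : Fin (m+1), ∑ j : Fin (m+1),
        (((Finset.powersetCard (k+1) (Finset.univ : Finset (Fin (m+1)))).filter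
          (fun S => i ∈ S ∧ j ∈ S)).card : ℝ) * (inner ℝ (u i) (u j) : ℝ) := by
      rw [hTdef, ← double_swap]
      refine Finset.sum_congr rfl fun S _ => ?_
      rw [← real_inner_self_eq_norm_sq, sum_inner]
      exact Finset.sum_congr rfl fun i _ => inner_sum _ _ _
    have hrow : ∀ i : Fin (m+1), ∑ j : Fin (m+1),
        (((Finset.powersetCard (k+1) (Finset.univ : Finset (Fin (m+1)))).filter
          (fun S => i ∈ S ∧ j ∈ S)).card : ℝ) * (inner ℝ (u i) (u j) : ℝ)
        = ((m.choose k : ℝ) - (b : ℝ)) * ‖u i‖ ^ 2 := by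
      intro i
      rw [← Finset.add_sum_erase _ _ (mem_univ i)]
      have h1 : ∀ j ∈ Finset.univ.erase i,
          (((Finset.powersetCard (k+1) (Finset.univ : Finset (Fin (m+1)))).filter
            (fun S => i ∈ S ∧ j ∈ S)).card : ℝ) * (inner ℝ (u i) (u j) : ℝ)
          = (b : ℝ) * (inner ℝ (u i) (u j) : ℝ) := by
        intro j hj
        rw [hNij i j (Ne.symm (mem_erase.1 hj).1)]
      rw [Finset.sum_congr rfl h1, ← Finset.mul_sum, ← inner_sum]
      have h2 : ∑ j ∈ Finset.univ.erase i, u j = - u i := by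
        have h3 := Finset.add_sum_erase Finset.univ u (mem_univ i)
        rw [husum] at h3
        exact eq_neg_of_add_eq_zero_right h3
      rw [h2, inner_neg_right, real_inner_self_eq_norm_sq, hNi i]
      ring
    have hTval : T = ((m.choose k : ℝ) - (b : ℝ)) * ∑ i : Fin (m+1), ‖u i‖ ^ 2 := by
      rw [hTsum, Finset.sum_congr rfl fun i _ => hrow i, ← Finset.mul_sum]
    -- numeric facts
    set Sg := ∑ i : Fin (m+1), ‖u i‖ ^ 2 with hSgdef
    have hSg0 : 0 ≤ Sg := Finset.sum_nonneg fun i _ => by positivity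
    have hvar' : (1 / ((m+1 : ℕ) : ℝ)) * Sg ≤ H₁ ^ 2 := hvar
    have hH : 0 ≤ H₁ ^ 2 := le_trans (by positivity) hvar'
    have hnpos : (0:ℝ) < ((m+1 : ℕ) : ℝ) := by positivity
    have hSgn : Sg ≤ ((m+1 : ℕ) : ℝ) * H₁ ^ 2 := by
      have hh := mul_le_mul_of_nonneg_left hvar' hnpos.le
      calc Sg = ((m+1 : ℕ) : ℝ) * ((1 / ((m+1 : ℕ) : ℝ)) * Sg) := by
            field_simp
        _ ≤ ((m+1 : ℕ) : ℝ) * H₁ ^ 2 := hh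
    set C := ((Finset.powersetCard (k+1) (Finset.univ : Finset (Fin (m+1)))).card : ℝ)
      with hCdef
    have hC : (0 : ℝ) < C := by
      rw [hCdef, Finset.card_powersetCard, card_univ, Fintype.card_fin]
      exact_mod_cast Nat.choose_pos hAn
    have hid : ((m+1 : ℕ) : ℝ) * (m.choose k : ℝ) = ((k+1 : ℕ) : ℝ) * C := by
      rw [hCdef, Finset.card_powersetCard, card_univ, Fintype.card_fin]
      exact_mod_cast (Nat.add_one_mul_choose_eq m k).trans (mul_comm _ _)
    have hTb : T ≤ (m.choose k : ℝ) * Sg := by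
      rw [hTval]
      nlinarith [Nat.cast_nonneg (α := ℝ) b]
    clear_value T C Sg
    rw [div_le_iff₀ hC]
    have step1 : (((k+1 : ℕ) : ℝ)⁻¹) ^ 2 * T
        ≤ (((k+1 : ℕ) : ℝ)⁻¹) ^ 2 * ((m.choose k : ℝ) * (((m+1 : ℕ) : ℝ) * H₁ ^ 2)) := by
      have hstep : T ≤ (m.choose k : ℝ) * (((m+1 : ℕ) : ℝ) * H₁ ^ 2) :=
        le_trans hTb (mul_le_mul_of_nonneg_left hSgn (Nat.cast_nonneg _))
      exact mul_le_mul_of_nonneg_left hstep (by positivity)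
    have step2 : (((k+1 : ℕ) : ℝ)⁻¹) ^ 2 * ((m.choose k : ℝ) * (((m+1 : ℕ) : ℝ) * H₁ ^ 2))
        = 1 / ((k+1 : ℕ) : ℝ) * H₁ ^ 2 * C := by
      have hmm : (m.choose k : ℝ) * (((m+1 : ℕ) : ℝ) * H₁ ^ 2)
          = (((k+1 : ℕ) : ℝ) * C) * H₁ ^ 2 := by
        rw [← hid]; ring
      rw [hmm]
      have hk0 : ((k+1 : ℕ) : ℝ) ≠ 0 := by positivity
      have h5 : ((k+1 : ℕ) : ℝ)⁻¹ * ((k+1 : ℕ) : ℝ) = 1 := inv_mul_cancel₀ hk0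
      rw [pow_two, one_div]
      linear_combination ((k+1 : ℕ) : ℝ)⁻¹ * C * H₁ ^ 2 * h5
    exact step1.trans step2.le
end
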